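/- arXiv:2602.08279 — 3 statements merged into one kernel-verified Lean document; each statement's English description precedes it below -/
import Mathlib

section
/- For pure-form CMIs K = (C, ⟨Q_1,…,Q_k⟩) and K' = (C', ⟨Q'_1,…,Q'_l⟩) on {1,…,n}: K ∼ K' if and only if can(K) = can(K') (equality of CMIs: same conditioning set and equal multisets, except that all degenerate canonical forms (·,⟨⟩) are identified). -/
open scoped Classical
open scoped ENNReal NNReal

namespace Paper

variable {n : ℕ}

/-- The marginal distribution of the coordinates in `α` of a joint distribution `p` of
the discrete random variables `X_1, …, X_n` (each taking countably many values, coded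
as natural numbers). -/
noncomputable def marginal (p : PMF (Fin n → ℕ)) (α : Finset (Fin n)) :
    PMF ({ i // i ∈ α } → ℕ) :=
  p.map fun x i => x i.1

/-- The Shannon (joint) entropy `H(X_α)`. -/
noncomputable def Hm (p : PMF (Fin n → ℕ)) (α : Finset (Fin n)) : ℝ :=
  ∑' y, Real.negMulLog ((marginal p α) y).toReal

/-- The conditional entropy `H(X_β | X_α) = H(X_{β ∪ α}) - H(X_α)`. -/
noncomputable def Hc (p : PMF (Fin n → ℕ)) (β α : Finset (Fin n)) : ℝ :=
  Hm p (β ∪ α) - Hm p α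

/-- Every individual random variable `X_i` has finite Shannon entropy
(the series defining `H(X_i)` is summable). -/
def FiniteEntropy (p : PMF (Fin n → ℕ)) : Prop :=
  ∀ i : Fin n, Summable fun y : ℕ => Real.negMulLog ((p.map fun x => x i) y).toReal

/-- `J(X_{Q_1}, …, X_{Q_k} | X_C) = (∑ i, H(X_{Q_i}|X_C)) - H(X_{Q_1},…,X_{Q_k}|X_C)`;
the joint conditional entropy of the tuple `(X_{Q_1},…,X_{Q_k})` equals
`H(X_{∪ i, Q_i} | X_C)` since the two tuples determine each other. -/
noncomputable def J (p : PMF (Fin n → ℕ)) (C : Finset (Fin n))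
    (Qs : Multiset (Finset (Fin n))) : ℝ :=
  (Qs.map fun Q => Hc p Q C).sum - Hc p Qs.sup C

/-- A conditional mutual independency (CMI) on `{1, …, n}`: a conditioning set `C`
together with a finite multiset `⟨Q_1, …, Q_k⟩` of subsets of `{1, …, n}`. -/
structure CMI (n : ℕ) where
  C : Finset (Fin n)
  Qs : Multiset (Finset (Fin n))

/-- `K` is valid for the joint distribution `p`. -/
def Valid (p : PMF (Fin n → ℕ)) (K : CMI n) : Prop :=
  J p K.C K.Qs = 0

/-- `K` is degenerate: valid for every finite-entropy joint distribution. -/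
def Degenerate (K : CMI n) : Prop :=
  ∀ p : PMF (Fin n → ℕ), FiniteEntropy p → Valid p K

/-- `K ∼ K'`: valid for exactly the same finite-entropy joint distributions. -/
def Equivalent (K K' : CMI n) : Prop :=
  ∀ p : PMF (Fin n → ℕ), FiniteEntropy p → (Valid p K ↔ Valid p K')

/-- `K` implies `K'`. -/
def Implies (K K' : CMI n) : Prop :=
  ∀ p : PMF (Fin n → ℕ), FiniteEntropy p → Valid p K → Valid p K'

/-- `K` is in pure form: every `Q_i` is nonempty and disjoint from `C`. -/
def IsPure (K : CMI n) : Prop :=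
  ∀ Q ∈ K.Qs, Q ≠ ∅ ∧ Q ∩ K.C = ∅

/-- The pure form `pur(K) = (C, ⟨Q_i \ C : Q_i \ C ≠ ∅⟩)`. -/
noncomputable def pur (K : CMI n) : CMI n :=
  ⟨K.C, (K.Qs.map fun Q => Q \ K.C).filter fun Q => Q ≠ ∅⟩

/-- The set `𝕀_K` of repeated indices of `K`: indices lying in `Q_i ∩ Q_j` for two
distinct entries `i ≠ j` of the multiset (automatically `∅` when `k ≤ 1`). -/
noncomputable def repSet (K : CMI n) : Finset (Fin n) :=
  Finset.univ.filter fun q => 2 ≤ Multiset.card (K.Qs.filter fun Q => q ∈ Q)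

/-- The multiset `⟨P_1, …, P_t⟩` of nonempty sets among the `Q_i \ 𝕀_K`. -/
noncomputable def parts (K : CMI n) : Multiset (Finset (Fin n)) :=
  (K.Qs.map fun Q => Q \ repSet K).filter fun P => P ≠ ∅

/-- The multiset of the `P_j`-entries of the canonical form `can(K)`
(general notation). -/
noncomputable def canParts (K : CMI n) : Multiset (Finset (Fin n)) :=
  if Multiset.card K.Qs ≤ 1 then 0
  else if repSet K ≠ ∅ ∧ Multiset.card (parts K) ≤ 1 then 0
  else parts K

/-- The canonical form `can(K)` (of a pure-form CMI); all degenerate canonical forms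
`(·,⟨⟩)` are represented by `⟨∅, 0⟩`. -/
noncomputable def can (K : CMI n) : CMI n :=
  if Multiset.card K.Qs ≤ 1 then ⟨∅, 0⟩
  else if repSet K = ∅ then ⟨K.C, parts K⟩
  else if Multiset.card (parts K) ≤ 1 then ⟨K.C, {repSet K, repSet K}⟩
  else ⟨K.C, repSet K ::ₘ repSet K ::ₘ parts K⟩

/-- `R_K^{K'}`: the CMI "`K'` conditioning on `K`"; the degenerate case `(·,⟨⟩)` is
represented by `⟨∅, 0⟩`. -/
noncomputable def RCond (K K' : CMI n) : CMI n :=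
  let I := repSet (pur K)
  let I' := repSet (pur K')
  let Ts := ((canParts (pur K')).map fun P => P \ I).filter fun T => T ≠ ∅
  if I' \ I = ∅ ∧ Multiset.card Ts ≤ 1 then ⟨∅, 0⟩
  else if I' \ I = ∅ then ⟨K'.C \ I, Ts⟩
  else if Multiset.card Ts ≤ 1 then ⟨K'.C \ I, {I' \ I, I' \ I}⟩
  else ⟨K'.C \ I, (I' \ I) ::ₘ (I' \ I) ::ₘ Ts⟩





/-! ### ENNReal-valued entropy toolkit -/

noncomputable def EL (v : ℝ≥0∞) : ℝ≥0∞ := ENNReal.ofReal (- Real.log v.toReal)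

noncomputable def ent {A : Type*} (q : PMF A) : ℝ≥0∞ := ∑' a, q a * EL (q a)

lemma pmf_toReal_le_one {A : Type*} (q : PMF A) (a : A) : (q a).toReal ≤ 1 := by
  simpa using ENNReal.toReal_mono ENNReal.one_ne_top (q.coe_le_one a)

lemma negMulLog_pmf_nonneg {A : Type*} (q : PMF A) (a : A) :
    0 ≤ Real.negMulLog (q a).toReal :=
  Real.negMulLog_nonneg ENNReal.toReal_nonneg (pmf_toReal_le_one q a)

lemma ofReal_negMulLog_pmf {A : Type*} (q : PMF A) (a : A) :
    ENNReal.ofReal (Real.negMulLog (q a).toReal) = q a * EL (q a) := by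
  have h : Real.negMulLog (q a).toReal = (q a).toReal * (- Real.log (q a).toReal) := by
    simp only [Real.negMulLog_def]
    ring
  rw [h, ENNReal.ofReal_mul ENNReal.toReal_nonneg, ENNReal.ofReal_toReal (q.apply_ne_top a)]
  rfl

lemma ent_eq {A : Type*} (q : PMF A) :
    ent q = ∑' a, ENNReal.ofReal (Real.negMulLog (q a).toReal) := by
  exact (tsum_congr fun a => (ofReal_negMulLog_pmf q a)).symm

lemma tsum_toReal_ofReal {A : Type*} (f : A → ℝ) (hf : ∀ a, 0 ≤ f a) :
    ∑' a, f a = (∑' a, ENNReal.ofReal (f a)).toReal := by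
  by_cases h : Summable f
  · rw [← ENNReal.ofReal_tsum_of_nonneg hf h, ENNReal.toReal_ofReal (tsum_nonneg hf)]
  · rw [tsum_eq_zero_of_not_summable h]
    symm
    rw [ENNReal.toReal_eq_zero_iff]
    right
    by_contra hne
    have h2 := ENNReal.summable_toReal hne
    rw [show (fun a => (ENNReal.ofReal (f a)).toReal) = f from
      funext fun a => ENNReal.toReal_ofReal (hf a)] at h2
    exact h h2

lemma summable_iff_ofReal_ne_top {A : Type*} (f : A → ℝ) (hf : ∀ a, 0 ≤ f a) :
    Summable f ↔ ∑' a, ENNReal.ofReal (f a) ≠ ⊤ := by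
  constructor
  · intro h
    rw [← ENNReal.ofReal_tsum_of_nonneg hf h]
    exact ENNReal.ofReal_ne_top
  · intro h
    have h2 := ENNReal.summable_toReal h
    rwa [show (fun a => (ENNReal.ofReal (f a)).toReal) = f from
      funext fun a => ENNReal.toReal_ofReal (hf a)] at h2

lemma tsum_map_mul {A B : Type*} (q : PMF A) (g : A → B) (h : B → ℝ≥0∞) :
    ∑' b, (q.map g) b * h b = ∑' a, q a * h (g a) := by
  simp only [PMF.map_apply]
  calc ∑' b, (∑' a, if b = g a then q a else 0) * h b
      = ∑' b, ∑' a, (if b = g a then q a * h b else 0) := by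
        refine tsum_congr fun b => ?_
        rw [← ENNReal.tsum_mul_right]
        exact tsum_congr fun a => by split <;> simp
    _ = ∑' a, ∑' b, (if b = g a then q a * h b else 0) := ENNReal.tsum_comm
    _ = ∑' a, q a * h (g a) := tsum_congr fun a => by
        rw [tsum_eq_single (g a) (fun b hb => by simp [hb])]
        simp

lemma apply_le_map_apply {A B : Type*} (q : PMF A) (g : A → B) (a : A) :
    q a ≤ (q.map g) (g a) := by
  rw [PMF.map_apply]
  refine le_trans (le_of_eq ?_) (ENNReal.le_tsum a)
  simp

lemma exists_preimage_of_map_ne_zero {A B : Type*} {q : PMF A} {g : A → B} {b : B}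
    (h : (q.map g) b ≠ 0) : ∃ a, g a = b ∧ q a ≠ 0 := by
  by_contra hc
  push_neg at hc
  apply h
  rw [PMF.map_apply]
  refine ENNReal.tsum_eq_zero.mpr fun a => ?_
  split
  · rename_i hba
    exact hc a hba.symm
  · rfl

lemma EL_anti {v w : ℝ≥0∞} (hv : v ≠ 0) (hvw : v ≤ w) (hw : w ≤ 1) : EL w ≤ EL v := by
  apply ENNReal.ofReal_le_ofReal
  have hwt : w ≠ ⊤ := ne_top_of_le_ne_top ENNReal.one_ne_top hw
  have h0 : 0 < v.toReal := ENNReal.toReal_pos hv (ne_top_of_le_ne_top hwt hvw)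
  have h1 : v.toReal ≤ w.toReal := ENNReal.toReal_mono hwt hvw
  exact neg_le_neg (Real.log_le_log h0 h1)

lemma EL_one : EL 1 = 0 := by simp [EL]

lemma EL_mul {x y : ℝ≥0∞} (hx0 : x ≠ 0) (hx1 : x ≤ 1) (hy0 : y ≠ 0) (hy1 : y ≤ 1) :
    EL (x * y) = EL x + EL y := by
  have hxt : x ≠ ⊤ := ne_top_of_le_ne_top ENNReal.one_ne_top hx1
  have hyt : y ≠ ⊤ := ne_top_of_le_ne_top ENNReal.one_ne_top hy1
  have hx' : x.toReal ≠ 0 := ENNReal.toReal_ne_zero.mpr ⟨hx0, hxt⟩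
  have hy' : y.toReal ≠ 0 := ENNReal.toReal_ne_zero.mpr ⟨hy0, hyt⟩
  have hxl : 0 ≤ - Real.log x.toReal := by
    simpa using Real.log_nonpos ENNReal.toReal_nonneg (ENNReal.toReal_mono ENNReal.one_ne_top hx1 |>.trans (by norm_num))
  have hyl : 0 ≤ - Real.log y.toReal := by
    simpa using Real.log_nonpos ENNReal.toReal_nonneg (ENNReal.toReal_mono ENNReal.one_ne_top hy1 |>.trans (by norm_num))
  unfold EL
  rw [ENNReal.toReal_mul, Real.log_mul hx' hy', ← ENNReal.ofReal_add hxl hyl]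
  ring_nf

lemma ent_map_le {A B : Type*} (q : PMF A) (g : A → B) : ent (q.map g) ≤ ent q := by
  unfold ent
  rw [tsum_map_mul q g (fun b => EL ((q.map g) b))]
  refine ENNReal.tsum_le_tsum fun a => ?_
  by_cases h0 : q a = 0
  · simp [h0]
  · exact mul_le_mul_right
      (EL_anti h0 (apply_le_map_apply q g a) (PMF.coe_le_one _ _)) _

lemma ent_map_injective {A B : Type*} [Nonempty A] (q : PMF A) {g : A → B}
    (hg : Function.Injective g) : ent (q.map g) = ent q := by
  refine le_antisymm (ent_map_le q g) ?_
  obtain ⟨τ, hτ⟩ := hg.hasLeftInverse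
  have hmapid : (q.map g).map τ = q := by
    rw [PMF.map_comp]
    have h2 : τ ∘ g = id := funext fun a => hτ a
    rw [h2, PMF.map_id]
  calc ent q = ent ((q.map g).map τ) := by rw [hmapid]
    _ ≤ ent (q.map g) := ent_map_le _ _

lemma ent_pure {A : Type*} (y : A) : ent (PMF.pure y) = 0 := by
  unfold ent
  rw [tsum_eq_single y (fun b hb => by simp [PMF.pure_apply, hb])]
  simp [PMF.pure_apply, EL_one]

lemma ent_of_subsingleton {A : Type*} [Subsingleton A] [Nonempty A] (q : PMF A) :
    ent q = 0 := by
  have a₀ : A := Classical.arbitrary A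
  have h1 : q a₀ = 1 := by
    have := q.tsum_coe
    rwa [tsum_eq_single a₀ (fun b hb => absurd (Subsingleton.elim b a₀) hb)] at this
  unfold ent
  rw [tsum_eq_single a₀ (fun b hb => absurd (Subsingleton.elim b a₀) hb), h1]
  simp [EL_one]

/-- Gibbs' inequality in `ℝ≥0∞` form. -/
lemma ent_le_cross {A : Type*} (q : PMF A) (g : A → ℝ≥0∞)
    (hg1 : ∑' a, g a ≤ 1) (hsupp : ∀ a, q a ≠ 0 → g a ≠ 0) :
    ent q ≤ ∑' a, q a * EL (g a) := by
  by_cases hR : ∑' a, q a * EL (g a) = ⊤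
  · exact hR ▸ le_top
  have hgle : ∀ a, g a ≤ 1 := fun a => le_trans (ENNReal.le_tsum a) hg1
  have hgt : ∀ a, g a ≠ ⊤ := fun a => ne_top_of_le_ne_top ENNReal.one_ne_top (hgle a)
  set f : A → ℝ := fun a => (q a).toReal with hfdef
  set ga : A → ℝ := fun a => (g a).toReal with hgadef
  have hf0 : ∀ a, 0 ≤ f a := fun a => ENNReal.toReal_nonneg
  have hf1 : ∀ a, f a ≤ 1 := fun a => pmf_toReal_le_one q a
  have hga0 : ∀ a, 0 ≤ ga a := fun a => ENNReal.toReal_nonneg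
  have hga1 : ∀ a, ga a ≤ 1 := fun a => by
    simpa using ENNReal.toReal_mono ENNReal.one_ne_top (hgle a)
  have hsf : Summable f := ENNReal.summable_toReal (by rw [q.tsum_coe]; exact ENNReal.one_ne_top)
  have htf : ∑' a, f a = 1 := by
    rw [hfdef, ← ENNReal.tsum_toReal_eq (fun a => q.apply_ne_top a), q.tsum_coe]
    simp
  have hsg : Summable ga := ENNReal.summable_toReal (ne_top_of_le_ne_top ENNReal.one_ne_top hg1)
  have htg : ∑' a, ga a ≤ 1 := by
    rw [hgadef, ← ENNReal.tsum_toReal_eq hgt]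
    calc (∑' a, g a).toReal ≤ (1 : ℝ≥0∞).toReal :=
          ENNReal.toReal_mono ENNReal.one_ne_top hg1
      _ = 1 := by simp
  set cr : A → ℝ := fun a => (q a * EL (g a)).toReal with hcrdef
  have hscr : Summable cr := ENNReal.summable_toReal hR
  have hcr_eq : ∀ a, cr a = f a * (- Real.log (ga a)) := by
    intro a
    rw [hcrdef]
    simp only [ENNReal.toReal_mul]
    unfold EL
    rw [ENNReal.toReal_ofReal (by simpa using Real.log_nonpos (hga0 a) (hga1 a))]
  have hcr0 : ∀ a, 0 ≤ cr a := fun a => ENNReal.toReal_nonneg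
  have key : ∀ a, Real.negMulLog (f a) ≤ cr a + (ga a - f a) := by
    intro a
    rcases eq_or_lt_of_le (hf0 a) with h0 | hpos
    · rw [← h0]
      simp only [Real.negMulLog_zero]
      have := hga0 a
      have := hcr0 a
      linarith
    · have hq0 : q a ≠ 0 := by
        intro h
        rw [hfdef] at hpos
        simp [h] at hpos
      have hg0 : 0 < ga a := ENNReal.toReal_pos (hsupp a hq0) (hgt a)
      have hnml : Real.negMulLog (f a) = - (f a) * Real.log (f a) := by
        simp only [Real.negMulLog_def]
      rw [hcr_eq a, hnml]
      have hlog : Real.log (ga a / f a) ≤ ga a / f a - 1 :=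
        Real.log_le_sub_one_of_pos (by positivity)
      rw [Real.log_div (ne_of_gt hg0) (ne_of_gt hpos)] at hlog
      have h2 := mul_le_mul_of_nonneg_left hlog (le_of_lt hpos)
      have h3 : f a * (ga a / f a - 1) = ga a - f a := by
        field_simp
      rw [h3] at h2
      nlinarith
  have hsn : Summable (fun a => Real.negMulLog (f a)) := by
    refine Summable.of_nonneg_of_le
      (fun a => Real.negMulLog_nonneg (hf0 a) (hf1 a)) (fun a => ?_) (hscr.add hsg)
    calc Real.negMulLog (f a) ≤ cr a + (ga a - f a) := key a
      _ ≤ cr a + ga a := by linarith [hf0 a]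
  have hts : ∑' a, Real.negMulLog (f a) ≤ ∑' a, cr a := by
    calc ∑' a, Real.negMulLog (f a) ≤ ∑' a, (cr a + (ga a - f a)) :=
        Summable.tsum_le_tsum key hsn (hscr.add (hsg.sub hsf))
      _ = (∑' a, cr a) + ((∑' a, ga a) - (∑' a, f a)) := by
          rw [Summable.tsum_add hscr (hsg.sub hsf), Summable.tsum_sub hsg hsf]
      _ ≤ ∑' a, cr a := by rw [htf]; linarith
  rw [ent_eq]
  calc ∑' a, ENNReal.ofReal (Real.negMulLog (q a).toReal)
      = ENNReal.ofReal (∑' a, Real.negMulLog (f a)) :=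
        (ENNReal.ofReal_tsum_of_nonneg
          (fun a => Real.negMulLog_nonneg (hf0 a) (hf1 a)) hsn).symm
    _ ≤ ENNReal.ofReal (∑' a, cr a) := ENNReal.ofReal_le_ofReal hts
    _ = ∑' a, q a * EL (g a) := by
        rw [hcrdef, ← ENNReal.tsum_toReal_eq (f := fun a => q a * EL (g a))
          (fun a => ENNReal.mul_ne_top (q.apply_ne_top a)
            (by unfold EL; exact ENNReal.ofReal_ne_top)),
          ENNReal.ofReal_toReal hR]


/-! ### Subadditivity and submodularity of `ent` -/

lemma tsum_fix_snd_eq_map_snd {C D : Type*} (m : PMF (C × D)) (d : D) :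
    ∑' c, m (c, d) = (m.map Prod.snd) d := by
  rw [PMF.map_apply, ENNReal.tsum_prod']
  refine tsum_congr fun c => ?_
  rw [tsum_eq_single d (fun d' hd' => by simp [Ne.symm hd'])]
  simp

lemma ent_submod {A B C D : Type*} (q : PMF A) (u : A → B) (v : A → C) (r : A → D) :
    ent (q.map fun a => (u a, v a, r a)) + ent (q.map r)
      ≤ ent (q.map fun a => (u a, r a)) + ent (q.map fun a => (v a, r a)) := by
  set qur := q.map fun a => (u a, r a) with hqur
  set qvr := q.map fun a => (v a, r a) with hqvr
  set qr := q.map r with hqr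
  set w : A → B × C × D := fun a => (u a, v a, r a) with hw
  set g : B × C × D → ℝ≥0∞ := fun t => qur (t.1, t.2.2) * qvr (t.2.1, t.2.2) / qr t.2.2 with hg
  have hqr_ur : qr = qur.map Prod.snd := by
    rw [hqur, hqr, PMF.map_comp]
    rfl
  have hqr_vr : qr = qvr.map Prod.snd := by
    rw [hqvr, hqr, PMF.map_comp]
    rfl
  have hdomU : ∀ b d, qur (b, d) ≤ qr d := by
    intro b d
    rw [hqr_ur]
    exact apply_le_map_apply qur Prod.snd (b, d)
  have hdomV : ∀ c d, qvr (c, d) ≤ qr d := by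
    intro c d
    rw [hqr_vr]
    exact apply_le_map_apply qvr Prod.snd (c, d)
  have hsumU : ∀ d, ∑' b, qur (b, d) = qr d := by
    intro d
    rw [hqr_ur]
    exact tsum_fix_snd_eq_map_snd qur d
  have hsumV : ∀ d, ∑' c, qvr (c, d) = qr d := by
    intro d
    rw [hqr_vr]
    exact tsum_fix_snd_eq_map_snd qvr d
  have hg1 : ∑' t : B × C × D, g t ≤ 1 := by
    rw [ENNReal.tsum_prod']
    have step1 : ∀ b : B, ∑' (cd : C × D), g (b, cd) = ∑' c, ∑' d, g (b, c, d) :=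
      fun b => ENNReal.tsum_prod'
    rw [tsum_congr step1, ENNReal.tsum_comm (f := fun b c => ∑' d, g (b, c, d))]
    rw [tsum_congr (fun c => ENNReal.tsum_comm (f := fun b d => g (b, c, d)))]
    rw [ENNReal.tsum_comm (f := fun c d => ∑' b, g (b, c, d))]
    -- now : ∑' d, ∑' c, ∑' b, g (b, c, d) ≤ 1
    have hinner : ∀ d, (∑' c, ∑' b, g (b, c, d)) ≤ qr d := by
      intro d
      have hb : ∀ c, ∑' b, g (b, c, d) = qr d * (qvr (c, d) / qr d) := by
        intro c
        have : ∀ b, g (b, c, d) = qur (b, d) * (qvr (c, d) / qr d) := by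
          intro b
          simp only [hg, div_eq_mul_inv, mul_assoc]
        rw [tsum_congr this, ENNReal.tsum_mul_right, hsumU d]
      have hdiv : ∑' c, qvr (c, d) / qr d = (∑' c, qvr (c, d)) * (qr d)⁻¹ := by
        simp only [div_eq_mul_inv]
        exact ENNReal.tsum_mul_right
      rw [tsum_congr hb, ENNReal.tsum_mul_left, hdiv, hsumV d, ← div_eq_mul_inv]
      calc qr d * (qr d / qr d) ≤ qr d * 1 := mul_le_mul_right ENNReal.div_self_le_one _
        _ = qr d := mul_one _
    calc ∑' d, ∑' c, ∑' b, g (b, c, d) ≤ ∑' d, qr d := ENNReal.tsum_le_tsum hinner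
      _ = 1 := qr.tsum_coe
  have hsupp : ∀ t, (q.map w) t ≠ 0 → g t ≠ 0 := by
    intro t ht
    obtain ⟨a, hat, ha⟩ := exists_preimage_of_map_ne_zero ht
    have h1 : qur (t.1, t.2.2) ≠ 0 := by
      intro h
      apply ha
      have := apply_le_map_apply q (fun a => (u a, r a)) a
      rw [← hqur] at this
      have e : (u a, r a) = (t.1, t.2.2) := by rw [← hat]
      rw [e, h, le_zero_iff] at this
      exact this
    have h2 : qvr (t.2.1, t.2.2) ≠ 0 := by
      intro h
      apply ha
      have := apply_le_map_apply q (fun a => (v a, r a)) a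
      rw [← hqvr] at this
      have e : (v a, r a) = (t.2.1, t.2.2) := by rw [← hat]
      rw [e, h, le_zero_iff] at this
      exact this
    simp only [hg]
    rw [ENNReal.div_ne_zero]
    exact ⟨mul_ne_zero h1 h2, qr.apply_ne_top _⟩
  have key : ∀ t, (q.map w) t ≠ 0 →
      EL (g t) + EL (qr t.2.2) = EL (qur (t.1, t.2.2)) + EL (qvr (t.2.1, t.2.2)) := by
    intro t ht
    obtain ⟨a, hat, ha⟩ := exists_preimage_of_map_ne_zero ht
    have h1 : qur (t.1, t.2.2) ≠ 0 := by
      intro h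
      exact (hsupp t ht) (by simp only [hg]; rw [h, zero_mul, ENNReal.zero_div])
    have h2 : qvr (t.2.1, t.2.2) ≠ 0 := by
      intro h
      exact (hsupp t ht) (by simp only [hg]; rw [h, mul_zero, ENNReal.zero_div])
    have hz0 : qr t.2.2 ≠ 0 := by
      intro h
      exact h1 (le_zero_iff.mp (h ▸ hdomU t.1 t.2.2))
    set x := (qur (t.1, t.2.2)).toReal with hx
    set y := (qvr (t.2.1, t.2.2)).toReal with hy
    set z := (qr t.2.2).toReal with hz
    have hx0 : 0 < x := ENNReal.toReal_pos h1 (qur.apply_ne_top _)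
    have hy0 : 0 < y := ENNReal.toReal_pos h2 (qvr.apply_ne_top _)
    have hz0' : 0 < z := ENNReal.toReal_pos hz0 (qr.apply_ne_top _)
    have hx1 : x ≤ 1 := pmf_toReal_le_one qur _
    have hy1 : y ≤ 1 := pmf_toReal_le_one qvr _
    have hyz : y ≤ z := ENNReal.toReal_mono (qr.apply_ne_top _) (hdomV _ _)
    have hxz : x ≤ z := ENNReal.toReal_mono (qr.apply_ne_top _) (hdomU _ _)
    have hgt : (g t).toReal = x * y / z := by
      simp only [hg, ENNReal.toReal_div, ENNReal.toReal_mul]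
      rfl
    have hlogx : Real.log x ≤ 0 := Real.log_nonpos (le_of_lt hx0) hx1
    have hlogy : Real.log y ≤ Real.log z := Real.log_le_log hy0 hyz
    unfold EL
    rw [hgt, Real.log_div (by positivity) (ne_of_gt hz0'), Real.log_mul (ne_of_gt hx0) (ne_of_gt hy0)]
    rw [← ENNReal.ofReal_add (by linarith) (by simpa using Real.log_nonpos (le_of_lt hz0') (by
      calc z ≤ (1:ℝ≥0∞).toReal := ENNReal.toReal_mono ENNReal.one_ne_top (qr.coe_le_one _)
        _ = 1 := by simp))]
    rw [← ENNReal.ofReal_add (by linarith) (by linarith [Real.log_nonpos (le_of_lt hy0) hy1])]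
    congr 1
    ring
  have hstep : ent (q.map w) ≤ ∑' t, (q.map w) t * EL (g t) :=
    ent_le_cross (q.map w) g hg1 hsupp
  have hqrw : ent qr = ∑' t : B × C × D, (q.map w) t * EL (qr t.2.2) := by
    unfold ent
    rw [tsum_map_mul q w (fun t => EL (qr t.2.2)), tsum_map_mul q r (fun d => EL (qr d))]
  have hsplit : (∑' t, (q.map w) t * EL (g t)) + ent qr = ent qur + ent qvr := by
    rw [hqrw, ← ENNReal.tsum_add]
    have hcong : ∀ t, (q.map w) t * EL (g t) + (q.map w) t * EL (qr t.2.2)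
        = (q.map w) t * EL (qur (t.1, t.2.2)) + (q.map w) t * EL (qvr (t.2.1, t.2.2)) := by
      intro t
      by_cases ht : (q.map w) t = 0
      · simp [ht]
      · rw [← mul_add, ← mul_add, key t ht]
    rw [tsum_congr hcong, ENNReal.tsum_add]
    congr 1
    · rw [tsum_map_mul q w (fun t => EL (qur (t.1, t.2.2)))]
      unfold ent
      rw [tsum_map_mul q (fun a => (u a, r a)) (fun x => EL (qur x))]
    · rw [tsum_map_mul q w (fun t => EL (qvr (t.2.1, t.2.2)))]
      unfold ent
      rw [tsum_map_mul q (fun a => (v a, r a)) (fun x => EL (qvr x))]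
  calc ent (q.map w) + ent qr
      ≤ (∑' t, (q.map w) t * EL (g t)) + ent qr := add_le_add_left hstep _
    _ = ent qur + ent qvr := hsplit

/-! ### Marginals and `Hm` -/

noncomputable def EHm (p : PMF (Fin n → ℕ)) (α : Finset (Fin n)) : ℝ≥0∞ :=
  ent (marginal p α)

def restr (α : Finset (Fin n)) : (Fin n → ℕ) → ({ i // i ∈ α } → ℕ) := fun x i => x i.1

lemma marginal_def (p : PMF (Fin n → ℕ)) (α : Finset (Fin n)) :
    marginal p α = p.map (restr α) := rfl

def restr2 {α β : Finset (Fin n)} (h : α ⊆ β) :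
    ({ i // i ∈ β } → ℕ) → ({ i // i ∈ α } → ℕ) := fun y i => y ⟨i.1, h i.2⟩

lemma marginal_comp (p : PMF (Fin n → ℕ)) {α β : Finset (Fin n)} (h : α ⊆ β) :
    marginal p α = (marginal p β).map (restr2 h) := by
  rw [marginal_def, marginal_def, PMF.map_comp]
  rfl

lemma EHm_mono (p : PMF (Fin n → ℕ)) {α β : Finset (Fin n)} (h : α ⊆ β) :
    EHm p α ≤ EHm p β := by
  unfold EHm
  rw [marginal_comp p h]
  exact ent_map_le _ _

lemma EHm_empty (p : PMF (Fin n → ℕ)) : EHm p ∅ = 0 := by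
  haveI : IsEmpty {i // i ∈ (∅ : Finset (Fin n))} := ⟨fun i => (Finset.notMem_empty i.1 i.2)⟩
  exact ent_of_subsingleton _

lemma pair_restr_injective {α β : Finset (Fin n)} :
    Function.Injective (fun y : { i // i ∈ α ∪ β } → ℕ =>
      (restr2 (Finset.subset_union_left (s₂ := β)) y,
       restr2 (Finset.subset_union_right (s₁ := α)) y)) := by
  intro y y' h
  funext i
  rcases Finset.mem_union.mp i.2 with hα | hβ
  · exact congrFun (congrArg Prod.fst h) ⟨i.1, hα⟩
  · exact congrFun (congrArg Prod.snd h) ⟨i.1, hβ⟩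

lemma EHm_union_eq_triple (p : PMF (Fin n → ℕ)) (α β : Finset (Fin n)) :
    ent (p.map fun x => (restr α x, restr β x, restr (α ∩ β) x)) = EHm p (α ∪ β) := by
  have hcomp : (fun x => (restr α x, restr β x, restr (α ∩ β) x)) =
      (fun y : { i // i ∈ α ∪ β } → ℕ =>
        (restr2 (Finset.subset_union_left (s₂ := β)) y,
         restr2 (Finset.subset_union_right (s₁ := α)) y,
         restr2 (Finset.inter_subset_left.trans (Finset.subset_union_left (s₂ := β))) y))
        ∘ restr (α ∪ β) := rfl
  rw [hcomp, ← PMF.map_comp, ← marginal_def]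
  refine ent_map_injective _ ?_
  intro y y' h
  funext i
  rcases Finset.mem_union.mp i.2 with hα | hβ
  · exact congrFun (congrArg (fun t => t.1) h) ⟨i.1, hα⟩
  · exact congrFun (congrArg (fun t => t.2.1) h) ⟨i.1, hβ⟩

lemma EHm_eq_pair_left (p : PMF (Fin n → ℕ)) (α β : Finset (Fin n)) :
    ent (p.map fun x => (restr α x, restr (α ∩ β) x)) = EHm p α := by
  have hcomp : (fun x => (restr α x, restr (α ∩ β) x)) =
      (fun z : {i // i ∈ α} → ℕ => (z, restr2 (Finset.inter_subset_left : α ∩ β ⊆ α) z))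
        ∘ restr α := rfl
  rw [hcomp, ← PMF.map_comp, ← marginal_def]
  exact ent_map_injective _ (fun z z' h => congrArg Prod.fst h)

lemma EHm_eq_pair_right (p : PMF (Fin n → ℕ)) (α β : Finset (Fin n)) :
    ent (p.map fun x => (restr β x, restr (α ∩ β) x)) = EHm p β := by
  have hcomp : (fun x => (restr β x, restr (α ∩ β) x)) =
      (fun z : {i // i ∈ β} → ℕ => (z, restr2 (Finset.inter_subset_right : α ∩ β ⊆ β) z))
        ∘ restr β := rfl
  rw [hcomp, ← PMF.map_comp, ← marginal_def]
  exact ent_map_injective _ (fun z z' h => congrArg Prod.fst h)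

lemma EHm_submod (p : PMF (Fin n → ℕ)) (α β : Finset (Fin n)) :
    EHm p (α ∪ β) + EHm p (α ∩ β) ≤ EHm p α + EHm p β := by
  have h := ent_submod p (restr α) (restr β) (restr (α ∩ β))
  rw [EHm_union_eq_triple p α β, EHm_eq_pair_left p α β, EHm_eq_pair_right p α β] at h
  exact h

lemma EHm_subadd (p : PMF (Fin n → ℕ)) (α β : Finset (Fin n)) :
    EHm p (α ∪ β) ≤ EHm p α + EHm p β :=
  le_trans (le_add_right le_rfl) (EHm_submod p α β)

lemma ent_eval_eq (p : PMF (Fin n → ℕ)) (i : Fin n) :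
    ent (p.map fun x => x i) = EHm p {i} := by
  have hcomp : (fun x : Fin n → ℕ => x i) =
      (fun y : {j // j ∈ ({i} : Finset (Fin n))} → ℕ =>
        y ⟨i, Finset.mem_singleton_self i⟩) ∘ restr {i} := rfl
  rw [hcomp, ← PMF.map_comp, ← marginal_def]
  refine ent_map_injective _ ?_
  intro y y' h
  funext j
  have hj : j = ⟨i, Finset.mem_singleton_self i⟩ := Subtype.ext (Finset.mem_singleton.mp j.2)
  rw [hj]
  exact h

lemma finiteEntropy_iff (p : PMF (Fin n → ℕ)) :
    FiniteEntropy p ↔ ∀ i, EHm p {i} ≠ ⊤ := by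
  refine forall_congr' fun i => ?_
  rw [← ent_eval_eq p i, ent_eq]
  exact summable_iff_ofReal_ne_top _ (fun y => negMulLog_pmf_nonneg _ _)

lemma EHm_ne_top {p : PMF (Fin n → ℕ)} (hp : FiniteEntropy p) (α : Finset (Fin n)) :
    EHm p α ≠ ⊤ := by
  induction α using Finset.induction_on with
  | empty => rw [EHm_empty]; exact ENNReal.zero_ne_top
  | insert a s hni ih =>
      have h1 : EHm p (insert a s) ≤ EHm p {a} + EHm p s := by
        rw [Finset.insert_eq]
        exact EHm_subadd p {a} s
      exact ne_top_of_le_ne_top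
        (ENNReal.add_ne_top.mpr ⟨(finiteEntropy_iff p).mp hp a, ih⟩) h1

lemma Hm_eq_toReal (p : PMF (Fin n → ℕ)) (α : Finset (Fin n)) :
    Hm p α = (EHm p α).toReal := by
  unfold Hm EHm
  rw [ent_eq]
  exact tsum_toReal_ofReal _ (fun y => negMulLog_pmf_nonneg _ _)

lemma Hm_nonneg (p : PMF (Fin n → ℕ)) (α : Finset (Fin n)) : 0 ≤ Hm p α := by
  unfold Hm
  exact tsum_nonneg fun y => negMulLog_pmf_nonneg _ _

lemma Hm_empty (p : PMF (Fin n → ℕ)) : Hm p (∅ : Finset (Fin n)) = 0 := by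
  rw [Hm_eq_toReal, EHm_empty]
  simp

lemma Hm_mono {p : PMF (Fin n → ℕ)} (hp : FiniteEntropy p) {α β : Finset (Fin n)}
    (h : α ⊆ β) : Hm p α ≤ Hm p β := by
  rw [Hm_eq_toReal, Hm_eq_toReal]
  exact ENNReal.toReal_mono (EHm_ne_top hp β) (EHm_mono p h)

lemma Hm_submod {p : PMF (Fin n → ℕ)} (hp : FiniteEntropy p) (α β : Finset (Fin n)) :
    Hm p (α ∪ β) + Hm p (α ∩ β) ≤ Hm p α + Hm p β := by
  simp only [Hm_eq_toReal]
  rw [← ENNReal.toReal_add (EHm_ne_top hp _) (EHm_ne_top hp _),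
      ← ENNReal.toReal_add (EHm_ne_top hp _) (EHm_ne_top hp _)]
  exact ENNReal.toReal_mono (ENNReal.add_ne_top.mpr ⟨EHm_ne_top hp _, EHm_ne_top hp _⟩)
    (EHm_submod p α β)

/-! ### The fair-bit distributions -/

noncomputable def bitP (S : Finset (Fin n)) : PMF (Fin n → ℕ) :=
  (PMF.uniformOfFintype Bool).map fun b i => if i ∈ S then (if b then 1 else 0) else 0

lemma ent_uniform_bool : ent (PMF.uniformOfFintype Bool) = ENNReal.ofReal (Real.log 2) := by
  unfold ent
  have hval : ∀ b, (PMF.uniformOfFintype Bool) b = 2⁻¹ := by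
    intro b
    rw [PMF.uniformOfFintype_apply]
    norm_num
  rw [tsum_bool]
  simp only [hval]
  rw [← add_mul, ENNReal.inv_two_add_inv_two, one_mul]
  unfold EL
  congr 1
  rw [show ((2:ℝ≥0∞)⁻¹).toReal = (2:ℝ)⁻¹ by simp, Real.log_inv]
  ring

lemma EHm_bitP (S α : Finset (Fin n)) :
    EHm (bitP S) α = if (α ∩ S).Nonempty then ENNReal.ofReal (Real.log 2) else 0 := by
  unfold EHm
  rw [marginal_def]
  unfold bitP
  rw [PMF.map_comp]
  split
  · rename_i hne
    obtain ⟨i0, hi0⟩ := hne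
    rw [← ent_uniform_bool]
    apply ent_map_injective
    intro b b' h
    have h2 := congrFun h ⟨i0, Finset.mem_of_mem_inter_left hi0⟩
    simp only [Function.comp_apply, restr] at h2
    rw [if_pos (Finset.mem_of_mem_inter_right hi0),
        if_pos (Finset.mem_of_mem_inter_right hi0)] at h2
    cases b <;> cases b' <;> simp_all
  · rename_i hne
    have hconst : (restr α ∘ fun (b : Bool) i => if i ∈ S then (if b then 1 else 0) else 0)
        = Function.const Bool (fun _ : {i // i ∈ α} => 0) := by
      funext b
      funext i
      simp only [Function.comp_apply, restr, Function.const]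
      rw [if_neg]
      intro hiS
      exact hne ⟨i.1, Finset.mem_inter.mpr ⟨i.2, hiS⟩⟩
    rw [hconst, PMF.map_const]
    exact ent_pure _

lemma Hm_bitP (S α : Finset (Fin n)) :
    Hm (bitP S) α = if (α ∩ S).Nonempty then Real.log 2 else 0 := by
  rw [Hm_eq_toReal, EHm_bitP]
  split
  · exact ENNReal.toReal_ofReal (Real.log_nonneg one_le_two)
  · simp

lemma finiteEntropy_bitP (S : Finset (Fin n)) : FiniteEntropy (bitP S) := by
  rw [finiteEntropy_iff]
  intro i
  rw [EHm_bitP]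
  split
  · exact ENNReal.ofReal_ne_top
  · exact ENNReal.zero_ne_top

/-! ### Conditional entropy, `MI`, and `J` -/

section Jlayer

variable {p : PMF (Fin n → ℕ)}

lemma Hc_nonneg (hp : FiniteEntropy p) (β α : Finset (Fin n)) : 0 ≤ Hc p β α :=
  sub_nonneg.mpr (Hm_mono hp Finset.subset_union_right)

lemma Hc_empty_left (α : Finset (Fin n)) : Hc p ∅ α = 0 := by
  unfold Hc
  rw [Finset.empty_union]
  ring

lemma Hc_cond_mono (hp : FiniteEntropy p) {γ α : Finset (Fin n)} (β : Finset (Fin n))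
    (h : γ ⊆ α) : Hc p β α ≤ Hc p β γ := by
  have hsub := Hm_submod hp (β ∪ γ) α
  have h1 : (β ∪ γ) ∪ α = β ∪ α := by
    ext x
    have hx : x ∈ γ → x ∈ α := fun hx => h hx
    simp only [Finset.mem_union]
    tauto
  have h2 : Hm p γ ≤ Hm p ((β ∪ γ) ∩ α) :=
    Hm_mono hp (Finset.subset_inter Finset.subset_union_right h)
  unfold Hc
  rw [h1] at hsub
  linarith

lemma Hc_union_le (hp : FiniteEntropy p) (A B C : Finset (Fin n)) :
    Hc p (A ∪ B) C ≤ Hc p A C + Hc p B C := by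
  have hsub := Hm_submod hp (A ∪ C) (B ∪ C)
  have h1 : (A ∪ C) ∪ (B ∪ C) = (A ∪ B) ∪ C := by
    ext x
    simp only [Finset.mem_union]
    tauto
  have h2 : Hm p C ≤ Hm p ((A ∪ C) ∩ (B ∪ C)) :=
    Hm_mono hp (Finset.subset_inter Finset.subset_union_right Finset.subset_union_right)
  unfold Hc
  rw [h1] at hsub
  linarith

noncomputable def MI (p : PMF (Fin n → ℕ)) (A B C : Finset (Fin n)) : ℝ :=
  Hc p A C + Hc p B C - Hc p (A ∪ B) C

lemma MI_nonneg (hp : FiniteEntropy p) (A B C : Finset (Fin n)) : 0 ≤ MI p A B C := by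
  have := Hc_union_le hp A B C
  unfold MI
  linarith

lemma MI_comm (A B C : Finset (Fin n)) : MI p A B C = MI p B A C := by
  unfold MI
  rw [Finset.union_comm]
  ring

lemma MI_mono_left (hp : FiniteEntropy p) {A' A : Finset (Fin n)} (B C : Finset (Fin n))
    (h : A' ⊆ A) : MI p A' B C ≤ MI p A B C := by
  have hsub := Hm_submod hp (A ∪ C) (A' ∪ B ∪ C)
  have h1 : (A ∪ C) ∪ (A' ∪ B ∪ C) = (A ∪ B) ∪ C := by
    ext x
    have hx : x ∈ A' → x ∈ A := fun hx => h hx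
    simp only [Finset.mem_union]
    tauto
  have h2 : Hm p (A' ∪ C) ≤ Hm p ((A ∪ C) ∩ (A' ∪ B ∪ C)) := by
    refine Hm_mono hp (Finset.subset_inter ?_ ?_)
    · exact Finset.union_subset_union_left h
    · exact Finset.union_subset_union_left Finset.subset_union_left
  unfold MI Hc
  rw [h1] at hsub
  linarith

lemma MI_mono_right (hp : FiniteEntropy p) {B' B : Finset (Fin n)} (A C : Finset (Fin n))
    (h : B' ⊆ B) : MI p A B' C ≤ MI p A B C := by
  rw [MI_comm A B' C, MI_comm A B C]
  exact MI_mono_left hp A C h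

lemma MI_self (I C : Finset (Fin n)) : MI p I I C = Hc p I C := by
  unfold MI
  rw [Finset.union_self]
  ring

lemma Hc_single_le_MI (hp : FiniteEntropy p) {Q Q' : Finset (Fin n)} (C : Finset (Fin n))
    {q : Fin n} (hq : q ∈ Q) (hq' : q ∈ Q') : Hc p {q} C ≤ MI p Q Q' C := by
  rw [← MI_self {q} C]
  calc MI p {q} {q} C ≤ MI p {q} Q' C :=
        MI_mono_right hp _ _ (Finset.singleton_subset_iff.mpr hq')
    _ ≤ MI p Q Q' C := MI_mono_left hp _ _ (Finset.singleton_subset_iff.mpr hq)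

lemma Hc_le_sum (hp : FiniteEntropy p) (I C : Finset (Fin n)) :
    Hc p I C ≤ ∑ q ∈ I, Hc p {q} C := by
  induction I using Finset.induction_on with
  | empty =>
      rw [Hc_empty_left, Finset.sum_empty]
  | insert a s hni ih =>
      rw [Finset.sum_insert hni, Finset.insert_eq]
      calc Hc p ({a} ∪ s) C ≤ Hc p {a} C + Hc p s C := Hc_union_le hp _ _ _
        _ ≤ _ := by linarith

lemma J_zero (C : Finset (Fin n)) : J p C 0 = 0 := by
  unfold J
  simp [Hc_empty_left]

lemma J_singleton (C Q : Finset (Fin n)) : J p C {Q} = 0 := by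
  unfold J
  simp [Multiset.sup_singleton]

lemma J_cons (C Q : Finset (Fin n)) (Qs : Multiset (Finset (Fin n))) :
    J p C (Q ::ₘ Qs) = MI p Q Qs.sup C + J p C Qs := by
  unfold J MI
  rw [Multiset.map_cons, Multiset.sum_cons, Multiset.sup_cons]
  have h : Q ⊔ Qs.sup = Q ∪ Qs.sup := rfl
  rw [h]
  ring

lemma J_nonneg (hp : FiniteEntropy p) (C : Finset (Fin n))
    (Qs : Multiset (Finset (Fin n))) : 0 ≤ J p C Qs := by
  induction Qs using Multiset.induction_on with
  | empty => exact le_of_eq (J_zero C).symm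
  | cons Q Qs ih =>
      rw [J_cons]
      have := MI_nonneg hp Q Qs.sup C
      linarith

lemma MI_le_J (hp : FiniteEntropy p) (C Q Q' : Finset (Fin n))
    (R : Multiset (Finset (Fin n))) : MI p Q Q' C ≤ J p C (Q ::ₘ Q' ::ₘ R) := by
  rw [J_cons, J_cons]
  have h1 : MI p Q Q' C ≤ MI p Q ((Q' ::ₘ R).sup) C := by
    refine MI_mono_right hp _ _ ?_
    rw [Multiset.sup_cons]
    exact Finset.subset_union_left
  have h2 := MI_nonneg hp Q' R.sup C
  have h3 := J_nonneg hp C R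
  linarith

lemma J_card_le_one (C : Finset (Fin n)) {Qs : Multiset (Finset (Fin n))}
    (h : Multiset.card Qs ≤ 1) : J p C Qs = 0 := by
  rcases Nat.le_one_iff_eq_zero_or_eq_one.mp h with h0 | h1
  · rw [Multiset.card_eq_zero] at h0
    rw [h0]
    exact J_zero C
  · obtain ⟨Q, hQ⟩ := Multiset.card_eq_one.mp h1
    rw [hQ]
    exact J_singleton C Q

lemma exists_two_cons {Qs : Multiset (Finset (Fin n))} {q : Fin n}
    (h : 2 ≤ Multiset.card (Qs.filter fun Q => q ∈ Q)) :
    ∃ Q Q' R, Qs = Q ::ₘ Q' ::ₘ R ∧ q ∈ Q ∧ q ∈ Q' := by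
  have h0 : (Qs.filter fun Q => q ∈ Q) ≠ 0 := by
    intro h0
    rw [h0] at h
    simp at h
  obtain ⟨Q, hQ⟩ := Multiset.exists_mem_of_ne_zero h0
  have hQf := Multiset.of_mem_filter hQ
  have hQs := Multiset.mem_of_mem_filter hQ
  obtain ⟨R1, hR1⟩ := Multiset.exists_cons_of_mem hQs
  have hfil : Qs.filter (fun Q => q ∈ Q) = Q ::ₘ (R1.filter fun Q => q ∈ Q) := by
    rw [hR1, Multiset.filter_cons_of_pos (p := fun Q => q ∈ Q) _ hQf]
  rw [hfil, Multiset.card_cons] at h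
  have h0' : (R1.filter fun Q => q ∈ Q) ≠ 0 := by
    intro h0'
    rw [h0'] at h
    simp at h
  obtain ⟨Q', hQ'⟩ := Multiset.exists_mem_of_ne_zero h0'
  have hQ'f := Multiset.of_mem_filter hQ'
  have hQ's := Multiset.mem_of_mem_filter hQ'
  obtain ⟨R, hR⟩ := Multiset.exists_cons_of_mem hQ's
  exact ⟨Q, Q', R, by rw [hR1, hR], hQf, hQ'f⟩

lemma mem_repSet {K : CMI n} {q : Fin n} :
    q ∈ repSet K ↔ 2 ≤ Multiset.card (K.Qs.filter fun Q => q ∈ Q) := by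
  unfold repSet
  simp

lemma Hc_repSet_zero (hp : FiniteEntropy p) {K : CMI n} (hJ : J p K.C K.Qs = 0) :
    Hc p (repSet K) K.C = 0 := by
  have hq : ∀ q ∈ repSet K, Hc p {q} K.C = 0 := by
    intro q hq
    obtain ⟨Q, Q', R, hdec, h1, h2⟩ := exists_two_cons (mem_repSet.mp hq)
    have hle : Hc p {q} K.C ≤ J p K.C K.Qs := by
      rw [hdec]
      exact le_trans (Hc_single_le_MI hp K.C h1 h2) (MI_le_J hp _ _ _ _)
    rw [hJ] at hle
    have := Hc_nonneg hp {q} K.C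
    linarith
  have hle := Hc_le_sum hp (repSet K) K.C
  have hsum : ∑ q ∈ repSet K, Hc p {q} K.C = 0 := Finset.sum_eq_zero hq
  have := Hc_nonneg hp (repSet K) K.C
  linarith

lemma Hm_absorb (hp : FiniteEntropy p) {I C : Finset (Fin n)} (hI : Hc p I C = 0)
    (α : Finset (Fin n)) : Hm p (α ∪ I ∪ C) = Hm p (α ∪ C) := by
  refine le_antisymm ?_ (Hm_mono hp ?_)
  · have h1 : Hc p I (α ∪ C) ≤ Hc p I C := Hc_cond_mono hp I Finset.subset_union_right
    rw [hI] at h1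
    have h2 : I ∪ (α ∪ C) = α ∪ I ∪ C := by
      ext x
      simp only [Finset.mem_union]
      tauto
    unfold Hc at h1
    rw [h2] at h1
    linarith
  · intro x hx
    simp only [Finset.mem_union] at hx ⊢
    tauto

lemma Hc_union_absorb (hp : FiniteEntropy p) {I C : Finset (Fin n)} (hI : Hc p I C = 0)
    (X : Finset (Fin n)) : Hc p (X ∪ I) C = Hc p X C := by
  unfold Hc
  rw [Hm_absorb hp hI X]

lemma Hc_sdiff (hp : FiniteEntropy p) {I C : Finset (Fin n)} (hI : Hc p I C = 0)
    (Q : Finset (Fin n)) : Hc p Q C = Hc p (Q \ I) C := by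
  have e1 : Q ∪ I = (Q \ I) ∪ I := by
    ext x
    simp only [Finset.mem_union, Finset.mem_sdiff]
    tauto
  rw [← Hc_union_absorb hp hI Q, e1, Hc_union_absorb hp hI (Q \ I)]

lemma sup_map_sdiff (Qs : Multiset (Finset (Fin n))) (I : Finset (Fin n)) :
    (Qs.map (· \ I)).sup = Qs.sup \ I := by
  induction Qs using Multiset.induction_on with
  | empty => simp
  | cons Q Qs ih =>
      rw [Multiset.map_cons, Multiset.sup_cons, Multiset.sup_cons, ih]
      exact (Finset.union_sdiff_distrib Q Qs.sup I).symm

lemma J_sdiff (hp : FiniteEntropy p) {I C : Finset (Fin n)} (hI : Hc p I C = 0)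
    (Qs : Multiset (Finset (Fin n))) : J p C (Qs.map (· \ I)) = J p C Qs := by
  unfold J
  rw [Multiset.map_map, sup_map_sdiff]
  have h1 : Qs.map ((fun Q => Hc p Q C) ∘ (· \ I)) = Qs.map (fun Q => Hc p Q C) := by
    refine Multiset.map_congr rfl fun Q _ => ?_
    exact (Hc_sdiff hp hI Q).symm
  rw [h1, ← Hc_sdiff hp hI Qs.sup]

lemma sup_filter_ne_empty (Qs : Multiset (Finset (Fin n))) :
    (Qs.filter fun Q => Q ≠ ∅).sup = Qs.sup := by
  induction Qs using Multiset.induction_on with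
  | empty => simp
  | cons Q Qs ih =>
      by_cases hQ : Q ≠ ∅
      · rw [Multiset.filter_cons_of_pos (p := fun Q => Q ≠ ∅) _ hQ, Multiset.sup_cons, Multiset.sup_cons, ih]
      · rw [Multiset.filter_cons_of_neg (p := fun Q => Q ≠ ∅) _ hQ, Multiset.sup_cons, ih]
        push_neg at hQ
        rw [hQ]
        simp

lemma sum_map_filter_ne (C : Finset (Fin n)) (Qs : Multiset (Finset (Fin n))) :
    ((Qs.filter fun Q => Q ≠ ∅).map fun Q => Hc p Q C).sum
      = (Qs.map fun Q => Hc p Q C).sum := by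
  induction Qs using Multiset.induction_on with
  | empty => simp
  | cons Q Qs ih =>
      by_cases hQ : Q ≠ ∅
      · rw [Multiset.filter_cons_of_pos (p := fun Q => Q ≠ ∅) _ hQ, Multiset.map_cons, Multiset.sum_cons,
          Multiset.map_cons, Multiset.sum_cons, ih]
      · rw [Multiset.filter_cons_of_neg (p := fun Q => Q ≠ ∅) _ hQ, Multiset.map_cons, Multiset.sum_cons, ih]
        push_neg at hQ
        rw [hQ, Hc_empty_left]
        ring

lemma J_filter_ne (C : Finset (Fin n)) (Qs : Multiset (Finset (Fin n))) :
    J p C (Qs.filter fun Q => Q ≠ ∅) = J p C Qs := by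
  unfold J
  rw [sup_filter_ne_empty, sum_map_filter_ne]

lemma J_parts_eq (hp : FiniteEntropy p) {K : CMI n} (hI : Hc p (repSet K) K.C = 0) :
    J p K.C (parts K) = J p K.C K.Qs := by
  unfold parts
  rw [J_filter_ne, J_sdiff hp hI]

lemma valid_iff_sem (hp : FiniteEntropy p) (K : CMI n) :
    Valid p K ↔ (Hc p (repSet K) K.C = 0 ∧ J p K.C (parts K) = 0) := by
  unfold Valid
  constructor
  · intro hJ
    have h1 := Hc_repSet_zero hp hJ
    exact ⟨h1, by rw [J_parts_eq hp h1]; exact hJ⟩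
  · rintro ⟨h1, h2⟩
    rw [← J_parts_eq hp h1]
    exact h2

lemma MI_absorb_left (hp : FiniteEntropy p) {I C : Finset (Fin n)} (hI : Hc p I C = 0)
    (X : Finset (Fin n)) : MI p I X C = 0 := by
  unfold MI
  rw [hI, Finset.union_comm, Hc_union_absorb hp hI X]
  ring

lemma J_cons_II (hp : FiniteEntropy p) {I C : Finset (Fin n)} (hI : Hc p I C = 0)
    (R : Multiset (Finset (Fin n))) : J p C (I ::ₘ I ::ₘ R) = J p C R := by
  rw [J_cons, J_cons, MI_absorb_left hp hI, MI_absorb_left hp hI]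
  ring

lemma J_pair_self (C I : Finset (Fin n)) : J p C {I, I} = Hc p I C := by
  show J p C (I ::ₘ {I}) = _
  rw [J_cons, J_singleton, Multiset.sup_singleton, MI_self]
  ring

lemma valid_can (hp : FiniteEntropy p) (K : CMI n) : Valid p (can K) ↔ Valid p K := by
  rw [valid_iff_sem hp K]
  unfold can
  by_cases h1 : Multiset.card K.Qs ≤ 1
  · rw [if_pos h1]
    have hrep : repSet K = ∅ := by
      ext q
      simp only [Finset.notMem_empty, iff_false]
      intro hq
      have h2 := mem_repSet.mp hq
      have hc := Multiset.card_le_card (Multiset.filter_le (fun Q => q ∈ Q) K.Qs)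
      omega
    have hparts : Multiset.card (parts K) ≤ 1 := by
      unfold parts
      calc Multiset.card _ ≤ Multiset.card (K.Qs.map fun Q => Q \ repSet K) :=
            Multiset.card_le_card (Multiset.filter_le _ _)
        _ = Multiset.card K.Qs := Multiset.card_map _ _
        _ ≤ 1 := h1
    constructor
    · intro _
      exact ⟨by rw [hrep]; exact Hc_empty_left K.C, J_card_le_one K.C hparts⟩
    · intro _
      show J p (∅ : Finset (Fin n)) 0 = 0
      exact J_zero ∅
  · rw [if_neg h1]
    by_cases h2 : repSet K = ∅
    · rw [if_pos h2]
      show J p K.C (parts K) = 0 ↔ _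
      rw [h2]
      simp [Hc_empty_left]
    · rw [if_neg h2]
      by_cases h3 : Multiset.card (parts K) ≤ 1
      · rw [if_pos h3]
        show J p K.C {repSet K, repSet K} = 0 ↔ _
        rw [J_pair_self]
        constructor
        · intro h
          exact ⟨h, J_card_le_one K.C h3⟩
        · rintro ⟨h, _⟩
          exact h
      · rw [if_neg h3]
        show J p K.C (repSet K ::ₘ repSet K ::ₘ parts K) = 0 ↔ _
        constructor
        · intro h
          have hI : Hc p (repSet K) K.C = 0 := by
            have hle := MI_le_J hp K.C (repSet K) (repSet K) (parts K)
            rw [MI_self, h] at hle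
            have := Hc_nonneg hp (repSet K) K.C
            linarith
          refine ⟨hI, ?_⟩
          rw [← J_cons_II hp hI (parts K)]
          exact h
        · rintro ⟨hI, hP⟩
          rw [J_cons_II hp hI]
          exact hP

lemma equivalent_of_can_eq {K K' : CMI n} (h : can K = can K') : Equivalent K K' := by
  intro p hp
  rw [← valid_can hp K, ← valid_can hp K', h]

end Jlayer

/-! ### Purity facts, separation predicate, and the forward direction -/

section Forward

lemma pure_disj {K : CMI n} (hK : IsPure K) {Q : Finset (Fin n)} (hQ : Q ∈ K.Qs)
    {q : Fin n} (hq : q ∈ Q) : q ∉ K.C := by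
  intro hc
  have h2 := (hK Q hQ).2
  have h3 : q ∈ Q ∩ K.C := Finset.mem_inter.mpr ⟨hq, hc⟩
  rw [h2] at h3
  exact Finset.notMem_empty q h3

lemma repSet_exists_mem {K : CMI n} {q : Fin n} (hq : q ∈ repSet K) :
    ∃ Q ∈ K.Qs, q ∈ Q := by
  have h2 := mem_repSet.mp hq
  have h0 : (K.Qs.filter fun Q => q ∈ Q) ≠ 0 := by
    intro h0
    rw [h0] at h2
    simp at h2
  obtain ⟨Q, hQ⟩ := Multiset.exists_mem_of_ne_zero h0
  have h3 := Multiset.of_mem_filter hQ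
  exact ⟨Q, Multiset.mem_of_mem_filter hQ, h3⟩

lemma repSet_not_mem_C {K : CMI n} (hK : IsPure K) {q : Fin n} (hq : q ∈ repSet K) :
    q ∉ K.C := by
  obtain ⟨Q, hQ, hqQ⟩ := repSet_exists_mem hq
  exact pure_disj hK hQ hqQ

lemma parts_mem {K : CMI n} {P : Finset (Fin n)} (hP : P ∈ parts K) :
    P ≠ ∅ ∧ ∃ Q ∈ K.Qs, P = Q \ repSet K := by
  unfold parts at hP
  have h1 := Multiset.of_mem_filter hP
  have h2 := Multiset.mem_of_mem_filter hP
  obtain ⟨Q, hQ, hPQ⟩ := Multiset.mem_map.mp h2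
  exact ⟨h1, Q, hQ, hPQ.symm⟩

lemma parts_not_repSet {K : CMI n} {P : Finset (Fin n)} (hP : P ∈ parts K)
    {q : Fin n} (hq : q ∈ P) : q ∉ repSet K := by
  obtain ⟨-, Q, hQ, rfl⟩ := parts_mem hP
  exact (Finset.mem_sdiff.mp hq).2

lemma parts_not_mem_C {K : CMI n} (hK : IsPure K) {P : Finset (Fin n)} (hP : P ∈ parts K)
    {q : Fin n} (hq : q ∈ P) : q ∉ K.C := by
  obtain ⟨-, Q, hQ, rfl⟩ := parts_mem hP
  exact pure_disj hK hQ (Finset.mem_sdiff.mp hq).1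

/-- Pairwise disjointness of a multiset of finsets, in counting form. -/
def PD (R : Multiset (Finset (Fin n))) : Prop :=
  ∀ q : Fin n, Multiset.card (R.filter fun P => q ∈ P) ≤ 1

lemma filter_eq_zero_of {X : Type*} {R : Multiset X} {pr : X → Prop} [DecidablePred pr]
    (h : ∀ a ∈ R, ¬ pr a) : R.filter pr = 0 := by
  by_contra h0
  obtain ⟨a, ha⟩ := Multiset.exists_mem_of_ne_zero h0
  exact h a (Multiset.mem_of_mem_filter ha) (Multiset.of_mem_filter ha)

lemma one_le_card_filter {X : Type*} {R : Multiset X} {pr : X → Prop} [DecidablePred pr]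
    {a : X} (ha : a ∈ R) (hpa : pr a) : 1 ≤ Multiset.card (R.filter pr) := by
  have hm : a ∈ R.filter pr := Multiset.mem_filter.mpr ⟨ha, hpa⟩
  have h0 : R.filter pr ≠ 0 := by
    intro h0
    rw [h0] at hm
    simp at hm
  have := Multiset.card_pos.mpr h0
  omega

lemma PD_parts (K : CMI n) : PD (parts K) := by
  intro q
  by_cases hq : q ∈ repSet K
  · have h0 : ((parts K).filter fun P => q ∈ P) = 0 :=
      filter_eq_zero_of fun P hP hqP => (parts_not_repSet hP hqP) hq
    rw [h0]
    simp
  · have hq2 : Multiset.card (K.Qs.filter fun Q => q ∈ Q) ≤ 1 := by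
      have h := mem_repSet (K := K) (q := q)
      by_contra hc
      exact hq (h.mpr (by omega))
    calc Multiset.card ((parts K).filter fun P => q ∈ P)
        ≤ Multiset.card ((K.Qs.map fun Q => Q \ repSet K).filter fun P => q ∈ P) := by
          apply Multiset.card_le_card
          exact Multiset.filter_le_filter _ (Multiset.filter_le _ _)
      _ = Multiset.card (K.Qs.filter fun Q => q ∈ Q \ repSet K) := by
          rw [Multiset.filter_map]
          rw [Multiset.card_map]
          rfl
      _ ≤ Multiset.card (K.Qs.filter fun Q => q ∈ Q) := by
          apply Multiset.card_le_card
          apply Multiset.monotone_filter_right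
          intro Q hQ
          exact (Finset.mem_sdiff.mp hQ).1
      _ ≤ 1 := hq2

lemma mem_sup_iff {R : Multiset (Finset (Fin n))} {q : Fin n} :
    q ∈ R.sup ↔ ∃ P ∈ R, q ∈ P := by
  induction R using Multiset.induction_on with
  | empty => simp [Multiset.sup_zero]
  | cons A R ih =>
      rw [Multiset.sup_cons]
      constructor
      · intro h
        rcases Finset.mem_union.mp h with h | h
        · exact ⟨A, Multiset.mem_cons_self A R, h⟩
        · obtain ⟨P, hP, hq⟩ := ih.mp h
          exact ⟨P, Multiset.mem_cons_of_mem hP, hq⟩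
      · rintro ⟨P, hP, hq⟩
        rcases Multiset.mem_cons.mp hP with rfl | hP
        · exact Finset.mem_union_left _ hq
        · exact Finset.mem_union_right _ (ih.mpr ⟨P, hP, hq⟩)


/-- `q₁` and `q₂` lie in two different entries of `R`. -/
def SEP (q₁ q₂ : Fin n) (R : Multiset (Finset (Fin n))) : Prop :=
  ∃ P₁ P₂ T, R = P₁ ::ₘ P₂ ::ₘ T ∧ q₁ ∈ P₁ ∧ q₂ ∈ P₂

lemma SEP_comm {q₁ q₂ : Fin n} {R : Multiset (Finset (Fin n))} (h : SEP q₁ q₂ R) :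
    SEP q₂ q₁ R := by
  obtain ⟨P₁, P₂, T, hdec, h1, h2⟩ := h
  exact ⟨P₂, P₁, T, by rw [hdec]; exact Multiset.cons_swap P₁ P₂ T, h2, h1⟩

lemma sep_of_two_mem {R : Multiset (Finset (Fin n))} {A B : Finset (Fin n)} {q₁ q₂ : Fin n}
    (hA : A ∈ R) (hB : B ∈ R.erase A) (h1 : q₁ ∈ A) (h2 : q₂ ∈ B) : SEP q₁ q₂ R := by
  obtain ⟨T, hT⟩ := Multiset.exists_cons_of_mem hB
  refine ⟨A, B, T, ?_, h1, h2⟩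
  rw [← Multiset.cons_erase hA, hT]

lemma SEP_mem_sup_left {q₁ q₂ : Fin n} {R : Multiset (Finset (Fin n))}
    (h : SEP q₁ q₂ R) : q₁ ∈ R.sup := by
  obtain ⟨P₁, P₂, T, hdec, h1, _⟩ := h
  rw [hdec]
  exact mem_sup_iff.mpr ⟨P₁, Multiset.mem_cons_self _ _, h1⟩

lemma not_sep_of_same {R : Multiset (Finset (Fin n))} (hPD : PD R) {P : Finset (Fin n)}
    {q₁ q₂ : Fin n} (hP : P ∈ R) (h1 : q₁ ∈ P) (h2 : q₂ ∈ P) : ¬ SEP q₁ q₂ R := by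
  rintro ⟨P₁, P₂, T, hdec, hq1, hq2⟩
  rw [hdec] at hP
  rcases Multiset.mem_cons.mp hP with hPe | hP'
  · have hc := hPD q₂
    rw [hdec, Multiset.filter_cons_of_pos (p := fun X => q₂ ∈ X) _ (hPe ▸ h2),
      Multiset.card_cons] at hc
    have hone : 1 ≤ Multiset.card ((P₂ ::ₘ T).filter fun X => q₂ ∈ X) :=
      one_le_card_filter (Multiset.mem_cons_self P₂ T) hq2
    omega
  · have hc := hPD q₁
    rw [hdec, Multiset.filter_cons_of_pos (p := fun X => q₁ ∈ X) _ hq1,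
      Multiset.card_cons] at hc
    have hone : 1 ≤ Multiset.card ((P₂ ::ₘ T).filter fun X => q₁ ∈ X) := by
      rcases Multiset.mem_cons.mp hP' with hPe | hPT
      · exact one_le_card_filter (Multiset.mem_cons_self P₂ T) (hPe ▸ h1)
      · exact one_le_card_filter (Multiset.mem_cons_of_mem hPT) h1
    omega

lemma exists_two_of_card {X : Type*} {M : Multiset X} (h : 2 ≤ Multiset.card M) :
    ∃ a b T, M = a ::ₘ b ::ₘ T := by
  have hM0 : M ≠ 0 := by
    intro h0
    rw [h0] at h
    simp at h
  obtain ⟨a, ha⟩ := Multiset.exists_mem_of_ne_zero hM0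
  obtain ⟨T1, hT1⟩ := Multiset.exists_cons_of_mem ha
  have hT10 : T1 ≠ 0 := by
    intro h0
    rw [hT1, h0] at h
    simp at h
  obtain ⟨b, hb⟩ := Multiset.exists_mem_of_ne_zero hT10
  obtain ⟨T, hT⟩ := Multiset.exists_cons_of_mem hb
  exact ⟨a, b, T, by rw [hT1, hT]⟩

/-! #### Validity computations for `bitP` -/

lemma Hc_bitP_of_hit {S C : Finset (Fin n)} (hC : (C ∩ S).Nonempty) (β : Finset (Fin n)) :
    Hc (bitP S) β C = 0 := by
  have h2 : ((β ∪ C) ∩ S).Nonempty := by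
    obtain ⟨c, hc⟩ := hC
    rw [Finset.mem_inter] at hc
    exact ⟨c, Finset.mem_inter.mpr ⟨Finset.mem_union_right _ hc.1, hc.2⟩⟩
  unfold Hc
  rw [Hm_bitP, Hm_bitP, if_pos hC, if_pos h2]
  ring

lemma Hc_bitP_of_miss {S C : Finset (Fin n)} (hC : C ∩ S = ∅) (β : Finset (Fin n)) :
    Hc (bitP S) β C = if (β ∩ S).Nonempty then Real.log 2 else 0 := by
  have h1 : (β ∪ C) ∩ S = β ∩ S := by
    rw [Finset.union_inter_distrib_right, hC, Finset.union_empty]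
  have hCne : ¬ (C ∩ S).Nonempty := by
    rw [hC]
    exact Finset.not_nonempty_empty
  unfold Hc
  rw [Hm_bitP, Hm_bitP, h1, if_neg hCne]
  ring

lemma J_bitP_hit {S C : Finset (Fin n)} (hC : (C ∩ S).Nonempty)
    (R : Multiset (Finset (Fin n))) : J (bitP S) C R = 0 := by
  unfold J
  rw [Hc_bitP_of_hit hC]
  have hsum : (R.map fun Q => Hc (bitP S) Q C).sum = 0 := by
    apply Multiset.sum_eq_zero
    intro x hx
    obtain ⟨Q, hQ, rfl⟩ := Multiset.mem_map.mp hx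
    exact Hc_bitP_of_hit hC Q
  rw [hsum]
  ring

lemma sup_inter_empty {S : Finset (Fin n)} {R : Multiset (Finset (Fin n))}
    (h : ∀ Q ∈ R, Q ∩ S = ∅) : R.sup ∩ S = ∅ := by
  ext x
  simp only [Finset.mem_inter, Finset.notMem_empty, iff_false, not_and]
  intro hx hs
  obtain ⟨P, hP, hxP⟩ := mem_sup_iff.mp hx
  have h2 := h P hP
  have h3 : x ∈ P ∩ S := Finset.mem_inter.mpr ⟨hxP, hs⟩
  rw [h2] at h3
  exact Finset.notMem_empty x h3

lemma J_bitP_single_block {S C : Finset (Fin n)} (hC : C ∩ S = ∅)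
    {R : Multiset (Finset (Fin n))}
    (h : Multiset.card (R.filter fun Q => (Q ∩ S).Nonempty) ≤ 1) :
    J (bitP S) C R = 0 := by
  induction R using Multiset.induction_on with
  | empty => exact J_zero C
  | cons Q R ih =>
      rw [J_cons]
      by_cases hQ : (Q ∩ S).Nonempty
      · rw [Multiset.filter_cons_of_pos (p := fun Q => (Q ∩ S).Nonempty) _ hQ,
          Multiset.card_cons] at h
        have hR0 : ∀ X ∈ R, X ∩ S = ∅ := by
          intro X hX
          by_contra hne
          have h1 := one_le_card_filter (pr := fun Q => (Q ∩ S).Nonempty) hX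
            (Finset.nonempty_iff_ne_empty.mpr hne)
          omega
        have hJR : J (bitP S) C R = 0 := by
          apply ih
          have h0 : (R.filter fun Q => (Q ∩ S).Nonempty) = 0 :=
            filter_eq_zero_of fun X hX hne => by
              rw [hR0 X hX] at hne
              exact Finset.not_nonempty_empty hne
          rw [h0]
          simp
        rw [hJR]
        have hsup : R.sup ∩ S = ∅ := sup_inter_empty hR0
        unfold MI
        simp only [Hc_bitP_of_miss hC]
        rw [if_pos hQ, if_neg (by rw [hsup]; exact Finset.not_nonempty_empty),
            if_pos (by
              obtain ⟨x, hx⟩ := hQ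
              rw [Finset.mem_inter] at hx
              exact ⟨x, Finset.mem_inter.mpr ⟨Finset.mem_union_left _ hx.1, hx.2⟩⟩)]
        ring
      · rw [Multiset.filter_cons_of_neg (p := fun Q => (Q ∩ S).Nonempty) _ hQ] at h
        rw [ih h]
        have hQe : Q ∩ S = ∅ := Finset.not_nonempty_iff_eq_empty.mp hQ
        unfold MI
        simp only [Hc_bitP_of_miss hC]
        have h2 : (Q ∪ R.sup) ∩ S = R.sup ∩ S := by
          rw [Finset.union_inter_distrib_right, hQe, Finset.empty_union]
        rw [if_neg hQ, h2]
        ring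

lemma J_bitP_sep {S C : Finset (Fin n)} (hC : C ∩ S = ∅) {Q₁ Q₂ : Finset (Fin n)}
    {R : Multiset (Finset (Fin n))} (h1 : (Q₁ ∩ S).Nonempty) (h2 : (Q₂ ∩ S).Nonempty) :
    Real.log 2 ≤ J (bitP S) C (Q₁ ::ₘ Q₂ ::ₘ R) := by
  have hp := finiteEntropy_bitP S
  refine le_trans (le_of_eq ?_) (MI_le_J hp C Q₁ Q₂ R)
  unfold MI
  simp only [Hc_bitP_of_miss hC]
  rw [if_pos h1, if_pos h2,
    if_pos (h1.mono (Finset.inter_subset_inter Finset.subset_union_left (Finset.Subset.refl S)))]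
  ring

/-! #### The core invalidating distributions -/

lemma exists_core {K' : CMI n} (hK' : IsPure K') (h2 : 2 ≤ Multiset.card K'.Qs) :
    ∃ S₀ : Finset (Fin n), S₀ ∩ K'.C = ∅ ∧
      ∀ E : Finset (Fin n), E ∩ K'.C = ∅ → ¬ Valid (bitP (S₀ ∪ E)) K' := by
  by_cases hI : repSet K' = ∅
  · obtain ⟨Q₁, Q₂, T, hdec⟩ := exists_two_of_card h2
    have hQ₁ : Q₁ ∈ K'.Qs := by rw [hdec]; exact Multiset.mem_cons_self _ _
    have hQ₂ : Q₂ ∈ K'.Qs := by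
      rw [hdec]; exact Multiset.mem_cons_of_mem (Multiset.mem_cons_self _ _)
    obtain ⟨q₁, hq₁⟩ := Finset.nonempty_iff_ne_empty.mpr ((hK' Q₁ hQ₁).1)
    obtain ⟨q₂, hq₂⟩ := Finset.nonempty_iff_ne_empty.mpr ((hK' Q₂ hQ₂).1)
    refine ⟨{q₁, q₂}, ?_, ?_⟩
    · ext x
      simp only [Finset.mem_inter, Finset.mem_insert, Finset.mem_singleton,
        Finset.notMem_empty, iff_false, not_and]
      rintro (rfl | rfl)
      · exact pure_disj hK' hQ₁ hq₁
      · exact pure_disj hK' hQ₂ hq₂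
    · intro E hE hV
      have hCS : K'.C ∩ ({q₁, q₂} ∪ E) = ∅ := by
        ext x
        simp only [Finset.mem_inter, Finset.mem_union, Finset.mem_insert,
          Finset.mem_singleton, Finset.notMem_empty, iff_false, not_and]
        intro hx
        rintro ((rfl | rfl) | hxE)
        · exact pure_disj hK' hQ₁ hq₁ hx
        · exact pure_disj hK' hQ₂ hq₂ hx
        · have h3 : x ∈ E ∩ K'.C := Finset.mem_inter.mpr ⟨hxE, hx⟩
          rw [hE] at h3
          exact Finset.notMem_empty x h3
      have hJ : Real.log 2 ≤ J (bitP ({q₁, q₂} ∪ E)) K'.C K'.Qs := by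
        rw [hdec]
        refine J_bitP_sep hCS ?_ ?_
        · exact ⟨q₁, Finset.mem_inter.mpr ⟨hq₁,
            Finset.mem_union_left _ (Finset.mem_insert_self _ _)⟩⟩
        · exact ⟨q₂, Finset.mem_inter.mpr ⟨hq₂,
            Finset.mem_union_left _ (Finset.mem_insert.mpr (Or.inr (Finset.mem_singleton_self _)))⟩⟩
      unfold Valid at hV
      rw [hV] at hJ
      exact absurd hJ (not_le.mpr (Real.log_pos one_lt_two))
  · refine ⟨repSet K', ?_, ?_⟩
    · ext x
      simp only [Finset.mem_inter, Finset.notMem_empty, iff_false, not_and]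
      intro hx
      exact repSet_not_mem_C hK' hx
    · intro E hE hV
      have hCS : K'.C ∩ (repSet K' ∪ E) = ∅ := by
        ext x
        simp only [Finset.mem_inter, Finset.mem_union, Finset.notMem_empty, iff_false, not_and]
        intro hx
        rintro (hxI | hxE)
        · exact repSet_not_mem_C hK' hxI hx
        · have h3 : x ∈ E ∩ K'.C := Finset.mem_inter.mpr ⟨hxE, hx⟩
          rw [hE] at h3
          exact Finset.notMem_empty x h3
      have h1 := ((valid_iff_sem (finiteEntropy_bitP _) K').mp hV).1
      rw [Hc_bitP_of_miss hCS] at h1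
      obtain ⟨q, hq⟩ := Finset.nonempty_iff_ne_empty.mpr hI
      rw [if_pos ⟨q, Finset.mem_inter.mpr ⟨hq, Finset.mem_union_left _ hq⟩⟩] at h1
      exact absurd h1 (ne_of_gt (Real.log_pos one_lt_two))

lemma Equivalent.symm {K K' : CMI n} (h : Equivalent K K') : Equivalent K' K :=
  fun p hp => (h p hp).symm

lemma card_le_one_of_equiv {K K' : CMI n} (hE : Equivalent K K') (hK' : IsPure K')
    (h1 : Multiset.card K.Qs ≤ 1) : Multiset.card K'.Qs ≤ 1 := by
  by_contra h2
  obtain ⟨S₀, hS₀, hinv⟩ := exists_core hK' (by omega)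
  have hv : Valid (bitP (S₀ ∪ ∅)) K := J_card_le_one K.C h1
  exact hinv ∅ (by simp) ((hE _ (finiteEntropy_bitP _)).mp hv)

lemma C_aux {K K' : CMI n} (hE : Equivalent K K') (hK' : IsPure K')
    (h2' : 2 ≤ Multiset.card K'.Qs) {c : Fin n} (hc : c ∈ K.C) (hc' : c ∉ K'.C) : False := by
  obtain ⟨S₀, hS₀, hinv⟩ := exists_core hK' h2'
  have hvK : Valid (bitP (S₀ ∪ {c})) K := by
    rw [valid_iff_sem (finiteEntropy_bitP _) K]
    have hhit : (K.C ∩ (S₀ ∪ {c})).Nonempty :=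
      ⟨c, Finset.mem_inter.mpr ⟨hc, Finset.mem_union_right _ (Finset.mem_singleton_self c)⟩⟩
    exact ⟨Hc_bitP_of_hit hhit _, J_bitP_hit hhit _⟩
  refine hinv {c} ?_ ((hE _ (finiteEntropy_bitP _)).mp hvK)
  ext x
  simp only [Finset.mem_inter, Finset.mem_singleton, Finset.notMem_empty, iff_false, not_and]
  rintro rfl
  exact hc'

lemma C_eq_of_equiv {K K' : CMI n} (hE : Equivalent K K') (hK : IsPure K) (hK' : IsPure K')
    (h2 : 2 ≤ Multiset.card K.Qs) (h2' : 2 ≤ Multiset.card K'.Qs) : K.C = K'.C := by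
  ext c
  constructor
  · intro hc
    by_contra hc'
    exact C_aux hE hK' h2' hc hc'
  · intro hc
    by_contra hc'
    exact C_aux hE.symm hK h2 hc hc'

lemma rep_aux {K K' : CMI n} (hE : Equivalent K K') (hK : IsPure K) (hK' : IsPure K')
    (hC : K'.C = K.C) {q : Fin n} (hq : q ∈ repSet K) (hq' : q ∉ repSet K') : False := by
  have hp := finiteEntropy_bitP ({q} : Finset (Fin n))
  have hqC : q ∉ K.C := repSet_not_mem_C hK hq
  have hCS : K.C ∩ {q} = ∅ := by
    ext x
    simp only [Finset.mem_inter, Finset.mem_singleton, Finset.notMem_empty, iff_false, not_and]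
    rintro hx rfl
    exact hqC hx
  have hvK' : Valid (bitP {q}) K' := by
    rw [valid_iff_sem hp K']
    constructor
    · rw [Hc_bitP_of_miss (by rw [hC]; exact hCS), if_neg]
      intro hne
      obtain ⟨x, hx⟩ := hne
      rw [Finset.mem_inter, Finset.mem_singleton] at hx
      exact hq' (hx.2 ▸ hx.1)
    · apply J_bitP_single_block (by rw [hC]; exact hCS)
      have hconv : ((parts K').filter fun P => (P ∩ {q}).Nonempty)
          = ((parts K').filter fun P => q ∈ P) := by
        apply Multiset.filter_congr
        intro P hP
        constructor
        · rintro ⟨x, hx⟩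
          rw [Finset.mem_inter, Finset.mem_singleton] at hx
          exact hx.2 ▸ hx.1
        · intro h
          exact ⟨q, Finset.mem_inter.mpr ⟨h, Finset.mem_singleton_self q⟩⟩
      rw [hconv]
      exact PD_parts K' q
  have hvK := (hE _ hp).mpr hvK'
  rw [valid_iff_sem hp K] at hvK
  have h1 := hvK.1
  rw [Hc_bitP_of_miss hCS,
    if_pos ⟨q, Finset.mem_inter.mpr ⟨hq, Finset.mem_singleton_self q⟩⟩] at h1
  exact absurd h1 (ne_of_gt (Real.log_pos one_lt_two))

lemma repSet_eq_of_equiv {K K' : CMI n} (hE : Equivalent K K') (hK : IsPure K)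
    (hK' : IsPure K') (hC : K.C = K'.C) : repSet K = repSet K' := by
  ext q
  constructor
  · intro hq
    by_contra hq'
    exact rep_aux hE hK hK' hC.symm hq hq'
  · intro hq
    by_contra hq'
    exact rep_aux hE.symm hK' hK hC hq hq'

end Forward

/-! ### canParts machinery and conclusion -/

section Final

lemma exists_two_cons_filter {X : Type*} {M : Multiset X} {pr : X → Prop} [DecidablePred pr]
    (h : 2 ≤ Multiset.card (M.filter pr)) :
    ∃ a b T, M = a ::ₘ b ::ₘ T ∧ pr a ∧ pr b := by
  have h0 : M.filter pr ≠ 0 := by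
    intro h0
    rw [h0] at h
    simp at h
  obtain ⟨a, ha⟩ := Multiset.exists_mem_of_ne_zero h0
  have haf := Multiset.of_mem_filter ha
  have has := Multiset.mem_of_mem_filter ha
  obtain ⟨R1, hR1⟩ := Multiset.exists_cons_of_mem has
  have hfil : M.filter pr = a ::ₘ (R1.filter pr) := by
    rw [hR1, Multiset.filter_cons_of_pos (p := pr) _ haf]
  rw [hfil, Multiset.card_cons] at h
  have h0' : R1.filter pr ≠ 0 := by
    intro h0'
    rw [h0'] at h
    simp at h
  obtain ⟨b, hb⟩ := Multiset.exists_mem_of_ne_zero h0'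
  have hbf := Multiset.of_mem_filter hb
  have hbs := Multiset.mem_of_mem_filter hb
  obtain ⟨T, hT⟩ := Multiset.exists_cons_of_mem hbs
  exact ⟨a, b, T, by rw [hR1, hT], haf, hbf⟩

lemma canParts_cases (K : CMI n) : canParts K = 0 ∨ canParts K = parts K := by
  unfold canParts
  split_ifs
  · exact Or.inl rfl
  · exact Or.inl rfl
  · exact Or.inr rfl

lemma canParts_mem_parts {K : CMI n} {P : Finset (Fin n)} (hP : P ∈ canParts K) :
    P ∈ parts K := by
  rcases canParts_cases K with h | h
  · rw [h] at hP
    simp at hP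
  · rwa [h] at hP

lemma PD_canParts (K : CMI n) : PD (canParts K) := by
  rcases canParts_cases K with h | h <;> rw [h]
  · intro q
    simp
  · exact PD_parts K

lemma canParts_entries_ne {K : CMI n} {P : Finset (Fin n)} (hP : P ∈ canParts K) : P ≠ ∅ :=
  (parts_mem (canParts_mem_parts hP)).1

lemma parts_card_of_rep_empty {K : CMI n} (hK : IsPure K) (hrep : repSet K = ∅) :
    Multiset.card (parts K) = Multiset.card K.Qs := by
  unfold parts
  rw [hrep]
  have hkeep : ∀ Q ∈ K.Qs.map (fun Q => Q \ (∅ : Finset (Fin n))), Q ≠ ∅ := by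
    intro Q hQ
    obtain ⟨Q', hQ', rfl⟩ := Multiset.mem_map.mp hQ
    rw [Finset.sdiff_empty]
    exact (hK Q' hQ').1
  rw [Multiset.filter_eq_self.mpr hkeep, Multiset.card_map]

lemma canParts_zero_or_two {K : CMI n} (hK : IsPure K) (h2 : 2 ≤ Multiset.card K.Qs) :
    canParts K = 0 ∨ 2 ≤ Multiset.card (canParts K) := by
  unfold canParts
  rw [if_neg (by omega)]
  split_ifs with h
  · exact Or.inl rfl
  · right
    by_cases hrep : repSet K = ∅
    · rw [parts_card_of_rep_empty hK hrep]
      omega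
    · push_neg at h
      have := h (Finset.nonempty_iff_ne_empty.mpr hrep)
      omega

lemma canParts_zero_imp {K : CMI n} (h0 : canParts K = 0) :
    Multiset.card (parts K) ≤ 1 := by
  unfold canParts at h0
  split_ifs at h0 with hc1 hc2
  · have hle : Multiset.card (parts K) ≤ Multiset.card K.Qs := by
      unfold parts
      calc Multiset.card ((K.Qs.map fun Q => Q \ repSet K).filter fun P => P ≠ ∅)
          ≤ Multiset.card (K.Qs.map fun Q => Q \ repSet K) :=
            Multiset.card_le_card (Multiset.filter_le _ _)
        _ = Multiset.card K.Qs := Multiset.card_map _ _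
    omega
  · exact hc2.2
  · rw [h0]
    simp

lemma PD_nodup {A : Multiset (Finset (Fin n))} (hPD : PD A) (hne : ∀ P ∈ A, P ≠ ∅) :
    A.Nodup := by
  rw [Multiset.nodup_iff_count_le_one]
  intro P
  by_cases hP : P ∈ A
  · obtain ⟨q, hq⟩ := Finset.nonempty_iff_ne_empty.mpr (hne P hP)
    calc A.count P = (A.filter fun X => q ∈ X).count P := by
          rw [Multiset.count_filter, if_pos hq]
      _ ≤ Multiset.card (A.filter fun X => q ∈ X) := Multiset.count_le_card _ _
      _ ≤ 1 := hPD q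
  · rw [Multiset.count_eq_zero_of_notMem hP]
    omega

lemma sep_discriminate {A B : Multiset (Finset (Fin n))}
    (hPDA : PD A) (hPDB : PD B)
    (hAne : ∀ P ∈ A, P ≠ ∅) (hBne : ∀ P ∈ B, P ≠ ∅)
    (hcardA : 2 ≤ Multiset.card A) (hcardB : B = 0 ∨ 2 ≤ Multiset.card B)
    {P : Finset (Fin n)} (hPA : P ∈ A) (hPB : P ∉ B) :
    ∃ q₁ q₂, q₁ ∈ A.sup ∪ B.sup ∧ q₂ ∈ A.sup ∪ B.sup ∧
      ((SEP q₁ q₂ A ∧ ¬ SEP q₁ q₂ B) ∨ (SEP q₁ q₂ B ∧ ¬ SEP q₁ q₂ A)) := by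
  obtain ⟨q₀, hq₀⟩ := Finset.nonempty_iff_ne_empty.mpr (hAne P hPA)
  have hA1 : A.erase P ≠ 0 := by
    intro h0
    have hce := Multiset.card_erase_of_mem hPA
    rw [h0] at hce
    simp at hce
    omega
  obtain ⟨P₂, hP₂⟩ := Multiset.exists_mem_of_ne_zero hA1
  obtain ⟨y₂, hy₂⟩ := Finset.nonempty_iff_ne_empty.mpr
    (hAne P₂ (Multiset.mem_of_mem_erase hP₂))
  by_cases hcase1 : ∃ q ∈ P, q ∉ B.sup
  · obtain ⟨q, hqP, hqB⟩ := hcase1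
    refine ⟨q, y₂, ?_, ?_, Or.inl ⟨sep_of_two_mem hPA hP₂ hqP hy₂, ?_⟩⟩
    · exact Finset.mem_union_left _ (mem_sup_iff.mpr ⟨P, hPA, hqP⟩)
    · exact Finset.mem_union_left _
        (mem_sup_iff.mpr ⟨P₂, Multiset.mem_of_mem_erase hP₂, hy₂⟩)
    · intro hsep
      exact hqB (SEP_mem_sup_left hsep)
  · push_neg at hcase1
    by_cases hcase2 : ∃ q₁ ∈ P, ∃ q₂ ∈ P, SEP q₁ q₂ B
    · obtain ⟨q₁, h1, q₂, h2, hsep⟩ := hcase2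
      refine ⟨q₁, q₂, ?_, ?_, Or.inr ⟨hsep, not_sep_of_same hPDA hPA h1 h2⟩⟩
      · exact Finset.mem_union_left _ (mem_sup_iff.mpr ⟨P, hPA, h1⟩)
      · exact Finset.mem_union_left _ (mem_sup_iff.mpr ⟨P, hPA, h2⟩)
    · push_neg at hcase2
      obtain ⟨P', hP'B, hq₀P'⟩ := mem_sup_iff.mp (hcase1 q₀ hq₀)
      have hsub : P ⊆ P' := by
        intro q hqP
        by_contra hqP'
        obtain ⟨X, hXB, hqX⟩ := mem_sup_iff.mp (hcase1 q hqP)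
        have hXne : X ≠ P' := fun h => hqP' (h ▸ hqX)
        have hXe : X ∈ B.erase P' := (Multiset.mem_erase_of_ne hXne).mpr hXB
        exact hcase2 q₀ hq₀ q hqP (sep_of_two_mem hP'B hXe hq₀P' hqX)
      have hPss : P ⊂ P' := lt_of_le_of_ne hsub (fun h => hPB (h ▸ hP'B))
      obtain ⟨y, hyP', hyP⟩ := Finset.exists_of_ssubset hPss
      by_cases hyA : y ∈ A.sup
      · obtain ⟨XA, hXA, hyXA⟩ := mem_sup_iff.mp hyA
        have hXAne : XA ≠ P := fun h => hyP (h ▸ hyXA)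
        have hXAe : XA ∈ A.erase P := (Multiset.mem_erase_of_ne hXAne).mpr hXA
        refine ⟨q₀, y, ?_, Finset.mem_union_left _ hyA,
          Or.inl ⟨sep_of_two_mem hPA hXAe hq₀ hyXA,
            not_sep_of_same hPDB hP'B hq₀P' hyP'⟩⟩
        exact Finset.mem_union_left _ (mem_sup_iff.mpr ⟨P, hPA, hq₀⟩)
      · have hB2 : 2 ≤ Multiset.card B := by
          rcases hcardB with h0 | h2'
          · rw [h0] at hP'B
            simp at hP'B
          · exact h2'
        have hB1 : B.erase P' ≠ 0 := by
          intro h0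
          have hce := Multiset.card_erase_of_mem hP'B
          rw [h0] at hce
          simp at hce
          omega
        obtain ⟨P₂', hP₂'⟩ := Multiset.exists_mem_of_ne_zero hB1
        obtain ⟨z, hz⟩ := Finset.nonempty_iff_ne_empty.mpr
          (hBne P₂' (Multiset.mem_of_mem_erase hP₂'))
        refine ⟨y, z, Finset.mem_union_right _ (mem_sup_iff.mpr ⟨P', hP'B, hyP'⟩),
          Finset.mem_union_right _
            (mem_sup_iff.mpr ⟨P₂', Multiset.mem_of_mem_erase hP₂', hz⟩),
          Or.inr ⟨sep_of_two_mem hP'B hP₂' hyP' hz, ?_⟩⟩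
        intro hsep
        exact hyA (SEP_mem_sup_left hsep)

lemma valid_bitP_pair {K : CMI n} (h2 : 2 ≤ Multiset.card K.Qs) {q₁ q₂ : Fin n}
    (h₁C : q₁ ∉ K.C) (h₁I : q₁ ∉ repSet K) (h₂C : q₂ ∉ K.C) (h₂I : q₂ ∉ repSet K) :
    Valid (bitP {q₁, q₂}) K ↔ ¬ SEP q₁ q₂ (canParts K) := by
  have hp := finiteEntropy_bitP ({q₁, q₂} : Finset (Fin n))
  have hCS : K.C ∩ {q₁, q₂} = ∅ := by
    ext x
    simp only [Finset.mem_inter, Finset.mem_insert, Finset.mem_singleton,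
      Finset.notMem_empty, iff_false, not_and]
    intro hx
    rintro (rfl | rfl)
    · exact h₁C hx
    · exact h₂C hx
  rw [valid_iff_sem hp K]
  constructor
  · rintro ⟨-, hJ⟩ hsep
    obtain ⟨P₁, P₂, T, hdec, hq1, hq2⟩ := hsep
    have hcp : canParts K = parts K := by
      rcases canParts_cases K with h | h
      · rw [h] at hdec
        exact absurd hdec.symm (Multiset.cons_ne_zero)
      · exact h
    rw [hcp] at hdec
    rw [hdec] at hJ
    have hge := J_bitP_sep (C := K.C) hCS (Q₁ := P₁) (Q₂ := P₂) (R := T)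
      ⟨q₁, Finset.mem_inter.mpr ⟨hq1, Finset.mem_insert_self _ _⟩⟩
      ⟨q₂, Finset.mem_inter.mpr ⟨hq2, Finset.mem_insert.mpr (Or.inr (Finset.mem_singleton_self _))⟩⟩
    rw [hJ] at hge
    exact absurd hge (not_le.mpr (Real.log_pos one_lt_two))
  · intro hnsep
    constructor
    · rw [Hc_bitP_of_miss hCS, if_neg]
      intro hne
      obtain ⟨x, hx⟩ := hne
      rw [Finset.mem_inter] at hx
      rcases Finset.mem_insert.mp hx.2 with rfl | hx2
      · exact h₁I hx.1
      · rw [Finset.mem_singleton] at hx2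
        exact h₂I (hx2 ▸ hx.1)
    · by_cases hcp : canParts K = parts K
      · apply J_bitP_single_block hCS
        by_contra hcard
        push_neg at hcard
        obtain ⟨X, Y, T, hdec, hX, hY⟩ := exists_two_cons_filter
          (show 2 ≤ Multiset.card ((parts K).filter
            fun Q => (Q ∩ ({q₁, q₂} : Finset (Fin n))).Nonempty) by omega)
        obtain ⟨a, ha⟩ := hX
        obtain ⟨b, hb⟩ := hY
        rw [Finset.mem_inter] at ha hb
        have hPD := PD_parts K
        have hsepXY : ∀ u v : Fin n, u ∈ X → v ∈ Y → SEP u v (parts K) := by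
          intro u v hu hv
          exact ⟨X, Y, T, hdec, hu, hv⟩
        have hcount : ∀ u : Fin n, u ∈ X → u ∈ Y → False := by
          intro u hu hv
          have hc := hPD u
          rw [hdec, Multiset.filter_cons_of_pos (p := fun P => u ∈ P) _ hu,
            Multiset.card_cons] at hc
          have hone := one_le_card_filter (pr := fun P => u ∈ P)
            (Multiset.mem_cons_self Y T) hv
          omega
        rw [← hcp] at hsepXY
        rcases Finset.mem_insert.mp ha.2 with ha2 | ha2 <;>
          rcases Finset.mem_insert.mp hb.2 with hb2 | hb2
        · exact hcount q₁ (ha2 ▸ ha.1) (hb2 ▸ hb.1)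
        · rw [Finset.mem_singleton] at hb2
          exact hnsep (hsepXY q₁ q₂ (ha2 ▸ ha.1) (hb2 ▸ hb.1))
        · rw [Finset.mem_singleton] at ha2
          exact hnsep (SEP_comm (hsepXY q₂ q₁ (ha2 ▸ ha.1) (hb2 ▸ hb.1)))
        · rw [Finset.mem_singleton] at ha2 hb2
          exact hcount q₂ (ha2 ▸ ha.1) (hb2 ▸ hb.1)
      · have h0 : canParts K = 0 := (canParts_cases K).resolve_right hcp
        exact J_card_le_one K.C (canParts_zero_imp h0)

lemma canParts_eq_of_equiv {K K' : CMI n} (hE : Equivalent K K') (hK : IsPure K)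
    (hK' : IsPure K') (h2 : 2 ≤ Multiset.card K.Qs) (h2' : 2 ≤ Multiset.card K'.Qs)
    (hC : K.C = K'.C) (hI : repSet K = repSet K') : canParts K = canParts K' := by
  by_contra hne
  have hNA : (canParts K).Nodup :=
    PD_nodup (PD_canParts K) (fun P hP => canParts_entries_ne hP)
  have hNB : (canParts K').Nodup :=
    PD_nodup (PD_canParts K') (fun P hP => canParts_entries_ne hP)
  have hmem : ¬ ∀ P, P ∈ canParts K ↔ P ∈ canParts K' := by
    intro h
    exact hne ((Multiset.Nodup.ext hNA hNB).mpr h)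
  push_neg at hmem
  obtain ⟨P, hP⟩ := hmem
  have main : ∀ (K₁ K₂ : CMI n), Equivalent K₁ K₂ → IsPure K₁ → IsPure K₂ →
      2 ≤ Multiset.card K₁.Qs → 2 ≤ Multiset.card K₂.Qs →
      K₁.C = K₂.C → repSet K₁ = repSet K₂ →
      ∀ P₀ : Finset (Fin n), P₀ ∈ canParts K₁ → P₀ ∉ canParts K₂ → False := by
    intro K₁ K₂ hE₁ hK₁ hK₂ h₁ h₂ hC₁ hI₁ P₀ hPA hPB
    have hcA2 : 2 ≤ Multiset.card (canParts K₁) := by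
      rcases canParts_zero_or_two hK₁ h₁ with h | h
      · rw [h] at hPA
        simp at hPA
      · exact h
    obtain ⟨q₁, q₂, hq₁m, hq₂m, hxor⟩ :=
      sep_discriminate (PD_canParts K₁) (PD_canParts K₂)
        (fun P hP => canParts_entries_ne hP) (fun P hP => canParts_entries_ne hP)
        hcA2 (canParts_zero_or_two hK₂ h₂) hPA hPB
    have havoid : ∀ q : Fin n, q ∈ (canParts K₁).sup ∪ (canParts K₂).sup →
        q ∉ K₁.C ∧ q ∉ repSet K₁ := by
      intro q hq
      rcases Finset.mem_union.mp hq with hq | hq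
      · obtain ⟨X, hX, hqX⟩ := mem_sup_iff.mp hq
        have hX' := canParts_mem_parts hX
        exact ⟨parts_not_mem_C hK₁ hX' hqX, parts_not_repSet hX' hqX⟩
      · obtain ⟨X, hX, hqX⟩ := mem_sup_iff.mp hq
        have hX' := canParts_mem_parts hX
        constructor
        · rw [hC₁]
          exact parts_not_mem_C hK₂ hX' hqX
        · rw [hI₁]
          exact parts_not_repSet hX' hqX
    obtain ⟨h₁C, h₁I⟩ := havoid q₁ hq₁m
    obtain ⟨h₂C, h₂I⟩ := havoid q₂ hq₂m
    have hv₁ := valid_bitP_pair (K := K₁) h₁ h₁C h₁I h₂C h₂I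
    have hv₂ := valid_bitP_pair (K := K₂) h₂ (by rw [← hC₁]; exact h₁C)
      (by rw [← hI₁]; exact h₁I) (by rw [← hC₁]; exact h₂C) (by rw [← hI₁]; exact h₂I)
    have hEp := hE₁ _ (finiteEntropy_bitP ({q₁, q₂} : Finset (Fin n)))
    rcases hxor with ⟨hs, hns⟩ | ⟨hs, hns⟩
    · have hVK₂ : Valid (bitP {q₁, q₂}) K₂ := hv₂.mpr hns
      have hVK₁ : Valid (bitP {q₁, q₂}) K₁ := hEp.mpr hVK₂
      exact (hv₁.mp hVK₁) hs
    · have hVK₁ : Valid (bitP {q₁, q₂}) K₁ := hv₁.mpr hns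
      have hVK₂ : Valid (bitP {q₁, q₂}) K₂ := hEp.mp hVK₁
      exact (hv₂.mp hVK₂) hs
  rcases hP with ⟨hPA, hPB⟩ | ⟨hPB, hPA⟩
  · exact main K K' hE hK hK' h2 h2' hC hI P hPA hPB
  · exact main K' K hE.symm hK' hK h2' h2 hC.symm hI.symm P hPA hPB

lemma canParts_eq_parts_of_rep_empty {K : CMI n} (h2 : 2 ≤ Multiset.card K.Qs)
    (hrep : repSet K = ∅) : canParts K = parts K := by
  unfold canParts
  rw [if_neg (by omega), if_neg (by rintro ⟨h, -⟩; exact h hrep)]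

lemma can_eq_of_equiv {K K' : CMI n} (hE : Equivalent K K') (hK : IsPure K)
    (hK' : IsPure K') : can K = can K' := by
  by_cases h1 : Multiset.card K.Qs ≤ 1
  · have h1' := card_le_one_of_equiv hE hK' h1
    unfold can
    rw [if_pos h1, if_pos h1']
  · have h1'' : ¬ Multiset.card K'.Qs ≤ 1 := fun h => h1 (card_le_one_of_equiv hE.symm hK h)
    have h2 : 2 ≤ Multiset.card K.Qs := by omega
    have h2' : 2 ≤ Multiset.card K'.Qs := by omega
    have hC : K.C = K'.C := C_eq_of_equiv hE hK hK' h2 h2'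
    have hI : repSet K = repSet K' := repSet_eq_of_equiv hE hK hK' hC
    have hP : canParts K = canParts K' := canParts_eq_of_equiv hE hK hK' h2 h2' hC hI
    unfold can
    rw [if_neg h1, if_neg h1'']
    by_cases hrep : repSet K = ∅
    · have hrep' : repSet K' = ∅ := by rw [← hI]; exact hrep
      rw [if_pos hrep, if_pos hrep']
      have hparts : parts K = parts K' := by
        rw [← canParts_eq_parts_of_rep_empty h2 hrep, hP,
          canParts_eq_parts_of_rep_empty h2' hrep']
      rw [hC, hparts]
    · have hrep' : ¬ repSet K' = ∅ := fun h => hrep (by rw [hI, h])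
      rw [if_neg hrep, if_neg hrep']
      by_cases hcp : Multiset.card (parts K) ≤ 1
      · have hz : canParts K = 0 := by
          unfold canParts
          rw [if_neg (by omega), if_pos ⟨hrep, hcp⟩]
        have hz' : canParts K' = 0 := by rw [← hP]; exact hz
        have hcp' : Multiset.card (parts K') ≤ 1 := canParts_zero_imp hz'
        rw [if_pos hcp, if_pos hcp', hC, hI]
      · have hcp' : ¬ Multiset.card (parts K') ≤ 1 := by
          intro h
          have hz' : canParts K' = 0 := by
            unfold canParts
            rw [if_neg (by omega), if_pos ⟨hrep', h⟩]
          have hz : canParts K = 0 := hP.trans hz'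
          have := canParts_zero_imp hz
          omega
        have e1 : canParts K = parts K := by
          unfold canParts
          rw [if_neg (by omega), if_neg (by rintro ⟨-, h⟩; exact hcp h)]
        have e2 : canParts K' = parts K' := by
          unfold canParts
          rw [if_neg (by omega), if_neg (by rintro ⟨-, h⟩; exact hcp' h)]
        have hparts : parts K = parts K' := by rw [← e1, hP, e2]
        rw [if_neg hcp, if_neg hcp', hC, hI, hparts]

end Final


/-- for pure-form CMIs, `K ∼ K'` iff `can(K) = can(K')` (all degenerate
canonical forms being represented by `⟨∅, 0⟩`). -/
theorem stmt9 {n : ℕ} (K K' : CMI n) (hK : IsPure K) (hK' : IsPure K') :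
    Equivalent K K' ↔ can K = can K' := by
  constructor
  · intro h
    exact can_eq_of_equiv h hK hK'
  · exact equivalent_of_can_eq

end Paper
end

section
/- Let K and K' be non-degenerate CMIs with can(pur(K)) = (C, ⟨𝕀_K, 𝕀_K, P_1,…,P_t⟩) and can(pur(K')) = (C', ⟨𝕀_{K'}, 𝕀_{K'}, P'_1,…,P'_s⟩) (general notation). If K implies K', then C ⊆ C'; moreover, since C ∩ 𝕀_K = ∅, in fact C ⊆ C' \ 𝕀_K. -/
open scoped Classical

namespace Paper

variable {n : ℕ}

lemma ent_map_bool {Y : Type*} (g : Bool → Y) :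
    ∑' y, Real.negMulLog ((((PMF.uniformOfFintype Bool).map g)) y).toReal
      = if g true = g false then 0 else Real.log 2 := by
  have hval : ∀ y, (((PMF.uniformOfFintype Bool).map g)) y
      = (if y = g false then 2⁻¹ else 0) + (if y = g true then 2⁻¹ else 0) := by
    intro y
    rw [PMF.map_apply, tsum_bool]
    simp [PMF.uniformOfFintype_apply]
  by_cases h : g true = g false
  · rw [if_pos h]
    have hz : ∀ y, Real.negMulLog ((((PMF.uniformOfFintype Bool).map g)) y).toReal = 0 := by
      intro y
      rw [hval, ← h]
      by_cases hy : y = g true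
      · simp [hy]
        rw [ENNReal.toReal_add (by simp) (by simp)]
        norm_num [Real.negMulLog]
      · simp [hy, Real.negMulLog]
    simp only [hz, tsum_zero]
  · rw [if_neg h]
    have hne : g false ≠ g true := fun e => h e.symm
    rw [tsum_eq_sum (s := {g false, g true}) ?_]
    · rw [Finset.sum_pair hne]
      rw [hval, hval]
      simp [hne, hne.symm]
      norm_num [Real.negMulLog, Real.log_inv]
      rw [one_div, Real.log_inv]
      ring
    · intro y hy
      simp only [Finset.mem_insert, Finset.mem_singleton, not_or] at hy
      rw [hval]
      simp [hy.1, hy.2, Real.negMulLog]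

/-- The two-point distribution: all-zero, or the indicator of `S`, each w.p. 1/2. -/
noncomputable def pS (S : Finset (Fin n)) : PMF (Fin n → ℕ) :=
  (PMF.uniformOfFintype Bool).map (fun b i => if b = true ∧ i ∈ S then 1 else 0)

lemma Hm_pS (S α : Finset (Fin n)) :
    Hm (pS S) α = if α ∩ S = ∅ then 0 else Real.log 2 := by
  have hm : marginal (pS S) α
      = (PMF.uniformOfFintype Bool).map
          (fun b (i : {i // i ∈ α}) => if b = true ∧ i.1 ∈ S then 1 else 0) := by
    rw [marginal, pS, PMF.map_comp]
    rfl
  rw [Hm, hm, ent_map_bool]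
  congr 1
  rw [eq_iff_iff]
  constructor
  · intro hgf
    rw [Finset.eq_empty_iff_forall_notMem]
    intro x hx
    rw [Finset.mem_inter] at hx
    have := congrFun hgf ⟨x, hx.1⟩
    simp [hx.2] at this
  · intro he
    funext i
    have : i.1 ∉ S := by
      intro hiS
      rw [Finset.eq_empty_iff_forall_notMem] at he
      exact he i.1 (Finset.mem_inter.2 ⟨i.2, hiS⟩)
    simp [this]

lemma Hm_pS_nonneg (S α : Finset (Fin n)) : 0 ≤ Hm (pS S) α := by
  rw [Hm_pS]; split
  · exact le_refl 0
  · positivity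

lemma Hm_pS_le (S α : Finset (Fin n)) : Hm (pS S) α ≤ Real.log 2 := by
  rw [Hm_pS]; split
  · positivity
  · exact le_refl _

lemma fe_pS (S : Finset (Fin n)) : FiniteEntropy (pS S) := by
  intro i
  apply summable_of_ne_finset_zero (s := ({0, 1} : Finset ℕ))
  intro y hy
  simp only [Finset.mem_insert, Finset.mem_singleton, not_or] at hy
  have hm : (pS S).map (fun x => x i)
      = (PMF.uniformOfFintype Bool).map
          (fun b => if b = true ∧ i ∈ S then 1 else 0) := by
    rw [pS, PMF.map_comp]
    rfl
  rw [hm]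
  have hval : ((PMF.uniformOfFintype Bool).map
      (fun b => if b = true ∧ i ∈ S then (1:ℕ) else 0)) y = 0 := by
    rw [PMF.map_apply, tsum_bool]
    have h1 : y ≠ (if false = true ∧ i ∈ S then (1:ℕ) else 0) := by
      simp; exact hy.1
    have h2 : y ≠ (if true = true ∧ i ∈ S then (1:ℕ) else 0) := by
      split <;> simp [hy.1, hy.2]
    have h1' := h1
    have h2' := h2
    simp only at h1' h2'
    simp [if_neg, h1', h2']
    constructor
    · exact hy.1
    · split <;> simp [hy.1, hy.2]
  rw [hval]
  simp [Real.negMulLog]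


lemma hc_zero_of_subset (p : PMF (Fin n → ℕ)) {Q C : Finset (Fin n)} (h : Q ⊆ C) :
    Hc p Q C = 0 := by
  rw [Hc, Finset.union_eq_right.2 h, sub_self]

lemma two_le_filter_of_not_deg (K : CMI n) (h : ¬ Degenerate K) :
    2 ≤ Multiset.card (K.Qs.filter fun Q => Q \ K.C ≠ ∅) := by
  by_contra hlt
  push_neg at hlt
  apply h
  intro p _
  unfold Valid J
  set C := K.C with hC
  set F := K.Qs.filter (fun Q => Q \ C ≠ ∅) with hF
  set G := K.Qs.filter (fun Q => ¬ (Q \ C ≠ ∅)) with hG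
  have hsplit : F + G = K.Qs := Multiset.filter_add_not _ _
  have hGsub : ∀ Q ∈ G, Q ⊆ C := by
    intro Q hQ
    rw [hG, Multiset.mem_filter] at hQ
    have := not_not.1 hQ.2
    exact Finset.sdiff_eq_empty_iff_subset.1 this
  have hGsum : ((G.map fun Q => Hc p Q C)).sum = 0 := by
    apply Multiset.sum_eq_zero
    intro x hx
    obtain ⟨Q, hQ, rfl⟩ := Multiset.mem_map.1 hx
    exact hc_zero_of_subset p (hGsub Q hQ)
  have hGle : G.sup ≤ C := Multiset.sup_le.2 fun Q hQ => Finset.le_iff_subset.2 (hGsub Q hQ)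
  have hlt' : Multiset.card F < 2 := by
    simpa only [hF, Finset.nonempty_iff_ne_empty] using hlt
  interval_cases hcard : Multiset.card F
  · -- F = 0
    have hF0 : F = 0 := Multiset.card_eq_zero.1 hcard
    have hQsG : K.Qs = G := by rw [← hsplit, hF0, zero_add]
    rw [hQsG, hGsum, hc_zero_of_subset p (Finset.le_iff_subset.1 hGle), sub_zero]
  · -- F = {Q₀}
    obtain ⟨Q₀, hQ0⟩ := Multiset.card_eq_one.1 hcard
    have hQs : K.Qs = Q₀ ::ₘ G := by rw [← hsplit, hQ0]; rfl
    have hsup : K.Qs.sup ∪ C = Q₀ ∪ C := by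
      apply le_antisymm
      · apply Finset.union_subset _ Finset.subset_union_right
        refine Finset.le_iff_subset.1 (Multiset.sup_le.2 ?_)
        intro Q hQ
        rw [hQs, Multiset.mem_cons] at hQ
        rcases hQ with rfl | hQ
        · exact Finset.subset_union_left
        · exact (hGsub Q hQ).trans Finset.subset_union_right
      · apply Finset.union_subset _ Finset.subset_union_right
        refine Finset.Subset.trans ?_ Finset.subset_union_left
        have hmem : Q₀ ∈ K.Qs := by rw [hQs]; exact Multiset.mem_cons_self _ _
        exact Finset.le_iff_subset.1 (Multiset.le_sup hmem)
    have hHc : Hc p K.Qs.sup C = Hc p Q₀ C := by rw [Hc, hsup, Hc]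
    rw [hHc, hQs, Multiset.map_cons, Multiset.sum_cons, hGsum, add_zero, sub_self]

/-- if the non-degenerate `K` implies the non-degenerate `K'`, then
`C ⊆ C'`, and moreover `C ⊆ C' \ 𝕀_K`. -/
theorem stmt11 {n : ℕ} (K K' : CMI n)
    (hdK : ¬ Degenerate K) (hdK' : ¬ Degenerate K')
    (h : Implies K K') :
    K.C ⊆ K'.C ∧ K.C ⊆ K'.C \ repSet (pur K) := by
  -- Step 1: C ⊆ C'
  have hsub : K.C ⊆ K'.C := by
    intro c hc
    by_contra hc'
    -- K' has two entries with elements outside C'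
    have h2 := two_le_filter_of_not_deg K' hdK'
    set C' := K'.C with hC'
    set F := K'.Qs.filter (fun Q => Q \ C' ≠ ∅) with hF
    have hF0 : F ≠ 0 := by
      intro e; rw [e] at h2; simp at h2
    obtain ⟨Q1, hQ1⟩ := Multiset.exists_mem_of_ne_zero hF0
    obtain ⟨F2, hF2⟩ := Multiset.exists_cons_of_mem hQ1
    have hF20 : F2 ≠ 0 := by
      intro e
      rw [hF2, e] at h2
      simp at h2
    obtain ⟨Q2, hQ2⟩ := Multiset.exists_mem_of_ne_zero hF20
    obtain ⟨F3, hF3⟩ := Multiset.exists_cons_of_mem hQ2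
    have hle : Q1 ::ₘ Q2 ::ₘ F3 ≤ K'.Qs := by
      rw [← hF3, ← hF2, hF]; exact Multiset.filter_le _ _
    obtain ⟨u, hu⟩ := Multiset.le_iff_exists_add.1 hle
    set R := F3 + u with hR
    have hQs : K'.Qs = Q1 ::ₘ Q2 ::ₘ R := by
      rw [hu, hR, Multiset.cons_add, Multiset.cons_add]
    have hQ1p : Q1 \ C' ≠ ∅ := (Multiset.mem_filter.1 hQ1).2
    have hQ2p : Q2 \ C' ≠ ∅ := by
      have : Q2 ∈ F := by rw [hF2]; exact Multiset.mem_cons_of_mem hQ2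
      exact (Multiset.mem_filter.1 this).2
    obtain ⟨a, ha⟩ := Finset.nonempty_iff_ne_empty.2 hQ1p
    obtain ⟨b, hb⟩ := Finset.nonempty_iff_ne_empty.2 hQ2p
    rw [Finset.mem_sdiff] at ha hb
    set S : Finset (Fin n) := {c, a, b} with hS
    have hcS : c ∈ S := by simp [hS]
    have haS : a ∈ S := by simp [hS]
    have hbS : b ∈ S := by simp [hS]
    have hSC' : C' ∩ S = ∅ := by
      rw [Finset.eq_empty_iff_forall_notMem]
      intro x hx
      rw [Finset.mem_inter] at hx
      have hxS := hx.2
      simp only [hS, Finset.mem_insert, Finset.mem_singleton] at hxS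
      rcases hxS with rfl | rfl | rfl
      · exact hc' hx.1
      · exact ha.2 hx.1
      · exact hb.2 hx.1
    -- K is valid for pS S since c ∈ K.C ∩ S
    have hvK : Valid (pS S) K := by
      have hc0 : ∀ β : Finset (Fin n), Hc (pS S) β K.C = 0 := by
        intro β
        rw [Hc, Hm_pS, Hm_pS,
          if_neg (Finset.ne_empty_of_mem (Finset.mem_inter.2 ⟨Finset.mem_union_right _ hc, hcS⟩)),
          if_neg (Finset.ne_empty_of_mem (Finset.mem_inter.2 ⟨hc, hcS⟩)), sub_self]
      unfold Valid J
      rw [hc0]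
      rw [Multiset.sum_eq_zero, sub_zero]
      intro x hx
      obtain ⟨Q, _, rfl⟩ := Multiset.mem_map.1 hx
      exact hc0 Q
    have hvK' := h (pS S) (fe_pS S) hvK
    -- but J for K' is ≥ log 2 > 0
    unfold Valid J at hvK'
    rw [hQs, Multiset.map_cons, Multiset.map_cons, Multiset.sum_cons, Multiset.sum_cons] at hvK'
    have hmC' : Hm (pS S) C' = 0 := by rw [Hm_pS, if_pos hSC']
    have h1 : Hc (pS S) Q1 C' = Real.log 2 := by
      rw [Hc, hmC', sub_zero, Hm_pS,
        if_neg (Finset.ne_empty_of_mem (Finset.mem_inter.2 ⟨Finset.mem_union_left _ ha.1, haS⟩))]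
    have h2' : Hc (pS S) Q2 C' = Real.log 2 := by
      rw [Hc, hmC', sub_zero, Hm_pS,
        if_neg (Finset.ne_empty_of_mem (Finset.mem_inter.2 ⟨Finset.mem_union_left _ hb.1, hbS⟩))]
    have hRsum : 0 ≤ ((R.map fun Q => Hc (pS S) Q C')).sum := by
      apply Multiset.sum_nonneg
      intro x hx
      obtain ⟨Q, _, rfl⟩ := Multiset.mem_map.1 hx
      rw [Hc, hmC', sub_zero]
      exact Hm_pS_nonneg _ _
    have hsup : Hc (pS S) (Q1 ::ₘ Q2 ::ₘ R).sup C' ≤ Real.log 2 := by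
      rw [Hc, hmC', sub_zero]
      exact Hm_pS_le _ _
    have hlog : 0 < Real.log 2 := Real.log_pos (by norm_num)
    rw [h1, h2'] at hvK'
    linarith
  refine ⟨hsub, fun x hx => Finset.mem_sdiff.2 ⟨hsub hx, ?_⟩⟩
  intro hrep
  rw [repSet, Finset.mem_filter] at hrep
  have hne : (pur K).Qs.filter (fun Q => x ∈ Q) ≠ 0 := by
    intro e
    rw [e] at hrep
    simp at hrep
  obtain ⟨Q, hQ⟩ := Multiset.exists_mem_of_ne_zero hne
  rw [Multiset.mem_filter] at hQ
  have hQm := hQ.1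
  rw [pur] at hQm
  simp only [Multiset.mem_filter, Multiset.mem_map] at hQm
  obtain ⟨⟨Q0, _, rfl⟩, _⟩ := hQm
  exact (Finset.mem_sdiff.1 hQ.2).2 hx

end Paper
end

section
/- Let K and K' be non-degenerate CMIs with can(pur(K)) = (C, ⟨𝕀_K, 𝕀_K, P_1,…,P_t⟩) and can(pur(K')) = (C', ⟨𝕀_{K'}, 𝕀_{K'}, P'_1,…,P'_s⟩) (general notation). If K implies K', then 𝕀_{K'} ⊆ 𝕀_K. -/
open scoped Classical

namespace Paper

variable {n : ℕ}

section Stmt12Aux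

/-- The function sending a bit `b` to the point of `Fin n → ℕ` that is `b` at
coordinate `q` and `0` elsewhere. -/
noncomputable def bpF (q : Fin n) (b : Bool) : Fin n → ℕ :=
  fun i => if i = q then (if b then 1 else 0) else 0

/-- The distribution where `X_q` is a fair bit and all other coordinates are `0`. -/
noncomputable def bp (q : Fin n) : PMF (Fin n → ℕ) :=
  (PMF.uniformOfFintype Bool).map (bpF q)

lemma entropy_pure {Y : Type*} (c : Y) :
    ∑' y, Real.negMulLog (((PMF.pure c : PMF Y)) y).toReal = 0 := by
  have hz : ∀ y : Y, Real.negMulLog ((PMF.pure c : PMF Y) y).toReal = 0 := by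
    intro y
    rw [PMF.pure_apply]
    by_cases h : y = c <;> simp [h]
  simp only [hz, tsum_zero]

lemma entropy_two {Y : Type*} (h : Bool → Y) (hne : h false ≠ h true) :
    ∑' y, Real.negMulLog (((PMF.uniformOfFintype Bool).map h) y).toReal = Real.log 2 := by
  classical
  have happ : ∀ y, ((PMF.uniformOfFintype Bool).map h) y
      = (if y = h false then 2⁻¹ else 0) + (if y = h true then 2⁻¹ else 0) := by
    intro y
    rw [PMF.map_apply, tsum_bool]
    simp [PMF.uniformOfFintype_apply]
  rw [tsum_eq_sum (s := {h false, h true}) ?_]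
  · rw [Finset.sum_pair hne, happ (h false), happ (h true),
      if_pos rfl, if_pos rfl, if_neg hne, if_neg (Ne.symm hne)]
    simp only [add_zero, zero_add]
    rw [show ((2:ENNReal)⁻¹).toReal = (2:ℝ)⁻¹ by simp]
    rw [Real.negMulLog, Real.log_inv]
    ring
  · intro y hy
    simp only [Finset.mem_insert, Finset.mem_singleton, not_or] at hy
    rw [happ y, if_neg hy.1, if_neg hy.2]
    simp

lemma Hm_bp (q : Fin n) (α : Finset (Fin n)) :
    Hm (bp q) α = if q ∈ α then Real.log 2 else 0 := by
  have hmar : marginal (bp q) α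
      = (PMF.uniformOfFintype Bool).map
          (fun b (i : {i // i ∈ α}) => bpF q b i.1) := by
    rw [marginal, bp, PMF.map_comp]
    rfl
  rw [Hm, hmar]
  by_cases hq : q ∈ α
  · rw [if_pos hq]
    apply entropy_two
    intro hcon
    have := congrFun hcon ⟨q, hq⟩
    simp [bpF] at this
  · rw [if_neg hq]
    have hconst : (fun b (i : {i // i ∈ α}) => bpF q b i.1)
        = Function.const Bool (fun _ => (0:ℕ)) := by
      funext b i
      have hiq : i.1 ≠ q := fun hh => hq (hh ▸ i.2)
      simp [bpF, hiq, Function.const]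
    rw [hconst, PMF.map_const]
    exact entropy_pure _

lemma fe_bp (q : Fin n) : FiniteEntropy (bp q) := by
  intro i
  apply summable_of_ne_finset_zero (s := ({0, 1} : Finset ℕ))
  intro y hy
  simp only [Finset.mem_insert, Finset.mem_singleton, not_or] at hy
  have hz : ((bp q).map fun x => x i) y = 0 := by
    rw [bp, PMF.map_comp, PMF.map_apply, tsum_bool]
    have hb : ∀ b : Bool, y ≠ ((fun x : Fin n → ℕ => x i) ∘ bpF q) b := by
      intro b
      simp only [Function.comp, bpF]
      by_cases h : i = q <;> cases b <;> simp [h, hy.1, hy.2]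
    rw [if_neg (hb false), if_neg (hb true), add_zero]
  rw [hz]
  simp

lemma Hc_bp (q : Fin n) (β α : Finset (Fin n)) :
    Hc (bp q) β α = (if q ∈ β ∪ α then Real.log 2 else 0)
      - (if q ∈ α then Real.log 2 else 0) := by
  rw [Hc, Hm_bp, Hm_bp]

lemma sum_map_ite {α : Type*} (s : Multiset α) (p : α → Prop) [DecidablePred p] (c : ℝ) :
    (s.map fun a => if p a then c else 0).sum = (s.countP p) * c := by
  induction s using Multiset.induction with
  | empty => simp
  | cons a t ih =>
    rw [Multiset.map_cons, Multiset.sum_cons, ih, Multiset.countP_cons]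
    split_ifs <;> push_cast <;> ring

lemma mem_msup {a : Fin n} {s : Multiset (Finset (Fin n))} :
    a ∈ s.sup ↔ ∃ Q ∈ s, a ∈ Q := by
  induction s using Multiset.induction with
  | empty => simp [Multiset.sup_zero]
  | cons b t ih =>
    simp only [Multiset.sup_cons, Finset.sup_eq_union, Finset.mem_union, ih,
      Multiset.mem_cons]
    constructor
    · rintro (h | ⟨Q, hQ, hh⟩)
      · exact ⟨b, Or.inl rfl, h⟩
      · exact ⟨Q, Or.inr hQ, hh⟩
    · rintro ⟨Q, (rfl | hQ), hh⟩
      · exact Or.inl hh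
      · exact Or.inr ⟨Q, hQ, hh⟩

lemma countP_pur (K : CMI n) {q : Fin n} (hq : q ∉ K.C) :
    Multiset.countP (fun Q => q ∈ Q) (pur K).Qs
      = Multiset.countP (fun Q => q ∈ Q) K.Qs := by
  classical
  rw [pur]
  simp only [Multiset.countP_filter, Multiset.countP_map,
    ← Multiset.countP_eq_card_filter]
  apply Multiset.countP_congr rfl
  intro Q _
  simp only [eq_iff_iff, Finset.mem_sdiff, ne_eq]
  constructor
  · rintro ⟨⟨h1, _⟩, _⟩; exact h1
  · intro h1
    refine ⟨⟨h1, hq⟩, fun he => ?_⟩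
    have : q ∈ Q \ K.C := Finset.mem_sdiff.mpr ⟨h1, hq⟩
    rw [he] at this
    exact absurd this (Finset.notMem_empty q)

lemma mem_repSet_iff (M : CMI n) (q : Fin n) :
    q ∈ repSet M ↔ 2 ≤ Multiset.countP (fun Q => q ∈ Q) M.Qs := by
  classical
  rw [repSet, Finset.mem_filter, Multiset.countP_eq_card_filter]
  simp

/-- `K` is valid for `bp q` as soon as `q ∉ 𝕀_{pur K}`. -/
lemma valid_bp_of_not_rep (K : CMI n) {q : Fin n} (hq : q ∉ repSet (pur K)) :
    Valid (bp q) K := by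
  classical
  rw [Valid, J]
  by_cases hC : q ∈ K.C
  · have h1 : ∀ Q : Finset (Fin n), Hc (bp q) Q K.C = 0 := by
      intro Q
      rw [Hc_bp, if_pos (Finset.mem_union_right Q hC), if_pos hC, sub_self]
    have h2 : (K.Qs.map fun Q => Hc (bp q) Q K.C).sum = 0 := by
      rw [Multiset.map_congr rfl fun Q _ => h1 Q]
      simp
    rw [h2, h1, sub_zero]
  · have hcnt : Multiset.countP (fun Q => q ∈ Q) K.Qs ≤ 1 := by
      rw [← countP_pur K hC]
      rw [mem_repSet_iff, Multiset.countP_eq_card_filter] at hq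
      rw [Multiset.countP_eq_card_filter]
      omega
    have h1 : ∀ Q ∈ K.Qs, Hc (bp q) Q K.C = if q ∈ Q then Real.log 2 else 0 := by
      intro Q _
      rw [Hc_bp, if_neg hC, sub_zero]
      congr 1
      simp [Finset.mem_union, hC]
    have h2 : (K.Qs.map fun Q => Hc (bp q) Q K.C).sum
        = (Multiset.countP (fun Q => q ∈ Q) K.Qs) * Real.log 2 := by
      rw [Multiset.map_congr rfl h1, sum_map_ite]
    rw [h2, Hc_bp, if_neg hC, sub_zero]
    rcases Nat.le_one_iff_eq_zero_or_eq_one.mp hcnt with h0 | h0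
    · have hns : q ∉ K.Qs.sup ∪ K.C := by
        rw [Finset.mem_union]
        rintro (hs | hc)
        · obtain ⟨Q, hQ, hqQ⟩ := mem_msup.mp hs
          have := Multiset.countP_pos_of_mem (p := fun Q => q ∈ Q) hQ hqQ
          omega
        · exact hC hc
      rw [h0, if_neg hns]
      simp
    · have hpos : 0 < Multiset.countP (fun Q => q ∈ Q) K.Qs := by omega
      obtain ⟨Q, hQ, hqQ⟩ := Multiset.countP_pos.mp hpos
      have hs : q ∈ K.Qs.sup ∪ K.C :=
        Finset.mem_union_left _ (mem_msup.mpr ⟨Q, hQ, hqQ⟩)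
      rw [h0, if_pos hs]
      simp

/-- `K'` is invalid for `bp q` when `q ∈ 𝕀_{pur K'}`. -/
lemma not_valid_bp_of_rep (K' : CMI n) {q : Fin n} (hq : q ∈ repSet (pur K')) :
    ¬ Valid (bp q) K' := by
  classical
  have hq2 : 2 ≤ Multiset.countP (fun Q => q ∈ Q) (pur K').Qs :=
    (mem_repSet_iff _ q).mp hq
  have hqC' : q ∉ K'.C := by
    have hpos : 0 < Multiset.countP (fun Q => q ∈ Q) (pur K').Qs := by omega
    obtain ⟨Q, hQ, hqQ⟩ := Multiset.countP_pos.mp hpos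
    rw [pur] at hQ
    simp only [Multiset.mem_filter, Multiset.mem_map] at hQ
    obtain ⟨⟨Q0, _, rfl⟩, _⟩ := hQ
    exact fun hc => (Finset.mem_sdiff.mp hqQ).2 hc
  have hq2' : 2 ≤ Multiset.countP (fun Q => q ∈ Q) K'.Qs := by
    rw [← countP_pur K' hqC']; exact hq2
  rw [Valid, J]
  have h1 : ∀ Q ∈ K'.Qs, Hc (bp q) Q K'.C = if q ∈ Q then Real.log 2 else 0 := by
    intro Q _
    rw [Hc_bp, if_neg hqC', sub_zero]
    congr 1
    simp [Finset.mem_union, hqC']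
  have h2 : (K'.Qs.map fun Q => Hc (bp q) Q K'.C).sum
      = (Multiset.countP (fun Q => q ∈ Q) K'.Qs) * Real.log 2 := by
    rw [Multiset.map_congr rfl h1, sum_map_ite]
  obtain ⟨Q, hQ, hqQ⟩ := Multiset.countP_pos.mp
    (show 0 < Multiset.countP (fun Q => q ∈ Q) K'.Qs by omega)
  have hs : q ∈ K'.Qs.sup ∪ K'.C :=
    Finset.mem_union_left _ (mem_msup.mpr ⟨Q, hQ, hqQ⟩)
  rw [h2, Hc_bp, if_neg hqC', sub_zero, if_pos hs]
  have hlog : 0 < Real.log 2 := Real.log_pos (by norm_num)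
  have hge : (2:ℝ) ≤ (Multiset.countP (fun Q => q ∈ Q) K'.Qs : ℝ) := by
    exact_mod_cast hq2'
  intro hcon
  nlinarith

end Stmt12Aux

/-- if the non-degenerate `K` implies the non-degenerate `K'`, then
`𝕀_{K'} ⊆ 𝕀_K`. -/
theorem stmt12 {n : ℕ} (K K' : CMI n)
    (hdK : ¬ Degenerate K) (hdK' : ¬ Degenerate K')
    (h : Implies K K') :
    repSet (pur K') ⊆ repSet (pur K) := by
  intro q hq
  by_contra hqK
  exact not_valid_bp_of_rep K' hq (h (bp q) (fe_bp q) (valid_bp_of_not_rep K hqK))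

end Paper
end
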